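/- arXiv:1503.00226 — 4 statements merged into one kernel-verified Lean document; each statement's English description precedes it below -/
import Mathlib

section
/- Connection between the deterministic norm and the L²-norm (Proposition 2 of the paper, with the Lebesgue volume of A made explicit). For every α ∈ L²([0,τ]) one has f₀ (2B)^p e^{−B|β₀|₁} ‖α‖₂² ≤ ‖α‖²_det ≤ (∫_A e^{β₀·z} f_Z(z) dz) ‖α‖₂² ≤ e^{B|β₀|₁} ‖α‖₂², where (2B)^p is the Lebesgue measure of A = [−B,B]^p. -/
open MeasureTheory Real

/-- Proposition 2 of the paper, with the Lebesgue volume of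
`A = [−B,B]^p` made explicit.  Connection between the deterministic norm
`‖α‖²_det = ∫₀^τ ∫_A α(t)² e^{β₀·z} w(t,z) f_Z(z) dz dt` and the `L²`-norm
`‖α‖₂² = ∫₀^τ α(t)² dt`:
`f₀ (2B)^p e^{−B|β₀|₁} ‖α‖₂² ≤ ‖α‖²_det ≤ (∫_A e^{β₀·z} f_Z(z) dz) ‖α‖₂²
  ≤ e^{B|β₀|₁} ‖α‖₂²`. -/
theorem stmt_0
    (τ B f₀ : ℝ) (p : ℕ) (β₀ : Fin p → ℝ)
    (hτ : 0 < τ) (hB : 0 < B) (hf₀ : 0 < f₀)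
    (A : Set (Fin p → ℝ)) (hA : A = {z : Fin p → ℝ | ∀ j, |z j| ≤ B})
    -- f_Z is a probability density vanishing outside A
    (fZ : (Fin p → ℝ) → ℝ)
    (hfZmeas : Measurable fZ)
    (hfZnonneg : ∀ z, 0 ≤ fZ z)
    (hfZint : ∫ z, fZ z = 1)
    (hfZsupp : ∀ z, z ∉ A → fZ z = 0)
    -- w(t,z) plays the role of E[Y(t) | Z = z]
    (w : ℝ → (Fin p → ℝ) → ℝ)
    (hwmeas : Measurable (fun q : ℝ × (Fin p → ℝ) => w q.1 q.2))
    (hw01 : ∀ t z, w t z ∈ Set.Icc (0 : ℝ) 1)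
    -- lower-bound assumption: w(t,z) f_Z(z) ≥ f₀ on [0,τ] × A
    (hlow : ∀ t ∈ Set.Icc (0 : ℝ) τ, ∀ z ∈ A, f₀ ≤ w t z * fZ z)
    -- α is square integrable on [0,τ]
    (α : ℝ → ℝ) (hαmeas : Measurable α)
    (hαL2 : IntegrableOn (fun t => α t ^ 2) (Set.Icc 0 τ)) :
    f₀ * (2 * B) ^ p * Real.exp (-(B * ∑ j, |β₀ j|)) *
        (∫ t in Set.Icc 0 τ, α t ^ 2)
      ≤ (∫ t in Set.Icc 0 τ, ∫ z in A,
          α t ^ 2 * Real.exp (∑ j, β₀ j * z j) * w t z * fZ z)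
    ∧ (∫ t in Set.Icc 0 τ, ∫ z in A,
          α t ^ 2 * Real.exp (∑ j, β₀ j * z j) * w t z * fZ z)
      ≤ (∫ z in A, Real.exp (∑ j, β₀ j * z j) * fZ z) *
          (∫ t in Set.Icc 0 τ, α t ^ 2)
    ∧ (∫ z in A, Real.exp (∑ j, β₀ j * z j) * fZ z) *
          (∫ t in Set.Icc 0 τ, α t ^ 2)
      ≤ Real.exp (B * ∑ j, |β₀ j|) * (∫ t in Set.Icc 0 τ, α t ^ 2) := by
  set M : ℝ := B * ∑ j, |β₀ j| with hM
  set S : (Fin p → ℝ) → ℝ := fun z => ∑ j, β₀ j * z j with hSdef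
  -- A is a box
  have hA' : A = Set.pi Set.univ fun _ : Fin p => Set.Icc (-B) B := by
    rw [hA]; ext z; simp [Set.mem_pi, Set.mem_Icc, abs_le, Pi.le_def, forall_and]
  have hAmeas : MeasurableSet A := by
    rw [hA']; exact MeasurableSet.univ_pi fun _ => measurableSet_Icc
  have hAvol : volume A = ENNReal.ofReal ((2 * B) ^ p) := by
    rw [hA', volume_pi_pi]
    have h2 : B - -B = 2 * B := by ring
    simp only [Real.volume_Icc, h2, Finset.prod_const, Finset.card_univ, Fintype.card_fin]
    rw [← ENNReal.ofReal_pow (by positivity)]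
  have hAvolfin : volume A ≠ ⊤ := by rw [hAvol]; exact ENNReal.ofReal_ne_top
  have hSmeas : Measurable S := by
    apply Finset.measurable_sum
    intro j _
    exact (measurable_pi_apply j).const_mul _
  have hSbound : ∀ z ∈ A, |S z| ≤ M := by
    intro z hz
    rw [hA] at hz
    calc |S z| ≤ ∑ j, |β₀ j * z j| := Finset.abs_sum_le_sum_abs _ _
      _ ≤ ∑ j, |β₀ j| * B := by
          refine Finset.sum_le_sum fun j _ => ?_
          rw [abs_mul]
          exact mul_le_mul_of_nonneg_left (hz j) (abs_nonneg _)
      _ = M := by rw [hM, ← Finset.sum_mul, mul_comm]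
  have hfZint' : Integrable fZ := by
    by_contra h
    rw [integral_undef h] at hfZint; norm_num at hfZint
  -- the inner function
  set F : ℝ → (Fin p → ℝ) → ℝ := fun t z => Real.exp (S z) * w t z * fZ z with hFdef
  have hFnonneg : ∀ t z, 0 ≤ F t z := fun t z =>
    mul_nonneg (mul_nonneg (Real.exp_pos _).le (hw01 t z).1) (hfZnonneg z)
  have hFle : ∀ t z, F t z ≤ Real.exp M * fZ z := by
    intro t z
    show Real.exp (S z) * w t z * fZ z ≤ _
    by_cases hz : z ∈ A
    · calc Real.exp (S z) * w t z * fZ z ≤ Real.exp M * (w t z * fZ z) := by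
            rw [mul_assoc]
            exact mul_le_mul_of_nonneg_right
              (Real.exp_le_exp.2 ((abs_le.1 (hSbound z hz)).2))
              (mul_nonneg (hw01 t z).1 (hfZnonneg z))
        _ ≤ Real.exp M * (1 * fZ z) := by
            gcongr
            exacts [hfZnonneg z, (hw01 t z).2]
        _ = Real.exp M * fZ z := by ring
    · simp [hfZsupp z hz]
  have hwzmeas : ∀ t, Measurable (fun z => w t z) := fun t =>
    hwmeas.comp measurable_prodMk_left
  have hFmeas : ∀ t, Measurable (F t) := fun t =>
    ((hSmeas.exp.mul (hwzmeas t)).mul hfZmeas)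
  have hFint : ∀ t, IntegrableOn (F t) A := by
    intro t
    refine Integrable.mono' ((hfZint'.const_mul (Real.exp M)).restrict (s := A))
      (hFmeas t).aestronglyMeasurable (Filter.Eventually.of_forall fun z => ?_)
    rw [Real.norm_of_nonneg (hFnonneg t z)]
    exact hFle t z
  set g : ℝ → ℝ := fun t => ∫ z in A, F t z with hgdef
  have hgnonneg : ∀ t, 0 ≤ g t := fun t =>
    setIntegral_nonneg hAmeas fun z _ => hFnonneg t z
  set I : ℝ := ∫ z in A, Real.exp (S z) * fZ z with hIdef
  have hIint : IntegrableOn (fun z => Real.exp (S z) * fZ z) A := by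
    refine Integrable.mono' ((hfZint'.const_mul (Real.exp M)).restrict (s := A))
      (hSmeas.exp.mul hfZmeas).aestronglyMeasurable (Filter.Eventually.of_forall fun z => ?_)
    rw [Real.norm_of_nonneg (mul_nonneg (Real.exp_pos _).le (hfZnonneg z))]
    by_cases hz : z ∈ A
    · exact mul_le_mul_of_nonneg_right
        (Real.exp_le_exp.2 ((abs_le.1 (hSbound z hz)).2)) (hfZnonneg z)
    · simp [hfZsupp z hz]
  have hgle : ∀ t, g t ≤ I := by
    intro t
    refine setIntegral_mono_on (hFint t) hIint hAmeas fun z hz => ?_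
    show Real.exp (S z) * w t z * fZ z ≤ _
    calc Real.exp (S z) * w t z * fZ z ≤ Real.exp (S z) * 1 * fZ z :=
          mul_le_mul_of_nonneg_right
            (mul_le_mul_of_nonneg_left (hw01 t z).2 (Real.exp_pos _).le) (hfZnonneg z)
      _ = Real.exp (S z) * fZ z := by ring
  have hIle : I ≤ Real.exp M := by
    have h1 : ∫ z in A, fZ z = 1 := by
      rw [setIntegral_eq_integral_of_forall_compl_eq_zero fun z hz => hfZsupp z hz]
      exact hfZint
    calc I ≤ ∫ z in A, Real.exp M * fZ z := by
          refine setIntegral_mono_on hIint ((hfZint'.const_mul _).restrict) hAmeas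
            fun z hz => ?_
          exact mul_le_mul_of_nonneg_right
            (Real.exp_le_exp.2 ((abs_le.1 (hSbound z hz)).2)) (hfZnonneg z)
      _ = Real.exp M * ∫ z in A, fZ z := integral_const_mul _ _
      _ = Real.exp M := by rw [h1, mul_one]
  have hglow : ∀ t ∈ Set.Icc (0:ℝ) τ, f₀ * (2 * B) ^ p * Real.exp (-M) ≤ g t := by
    intro t ht
    have : (∫ _z in A, f₀ * Real.exp (-M)) ≤ g t := by
      refine setIntegral_mono_on (integrableOn_const hAvolfin)
        (hFint t) hAmeas fun z hz => ?_
      calc f₀ * Real.exp (-M) = Real.exp (-M) * f₀ := mul_comm _ _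
        _ ≤ Real.exp (S z) * (w t z * fZ z) := by
            refine mul_le_mul (Real.exp_le_exp.2 ?_) (hlow t ht z hz) hf₀.le
              (Real.exp_pos _).le
            linarith [(abs_le.1 (hSbound z hz)).1]
        _ = F t z := by simp only [hFdef]; ring
    rw [setIntegral_const, Measure.real, hAvol, ENNReal.toReal_ofReal (by positivity), smul_eq_mul] at this
    calc f₀ * (2 * B) ^ p * Real.exp (-M) = (2 * B) ^ p * (f₀ * Real.exp (-M)) := by ring
      _ ≤ g t := this
  -- measurability of g
  have hgmeas : StronglyMeasurable g := by
    have : StronglyMeasurable fun q : ℝ × (Fin p → ℝ) =>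
        Real.exp (S q.2) * w q.1 q.2 * fZ q.2 :=
      (((hSmeas.comp measurable_snd).exp.mul hwmeas).mul
        (hfZmeas.comp measurable_snd)).stronglyMeasurable
    exact this.integral_prod_right'
  -- rewrite the inner integral
  have hinner : ∀ t, (∫ z in A, α t ^ 2 * Real.exp (S z) * w t z * fZ z)
      = α t ^ 2 * g t := by
    intro t
    simp only [hgdef]
    rw [← integral_const_mul]
    refine setIntegral_congr_fun hAmeas fun z _ => ?_
    simp only [hFdef]; ring
  have houter : (∫ t in Set.Icc 0 τ, ∫ z in A,
        α t ^ 2 * Real.exp (S z) * w t z * fZ z)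
      = ∫ t in Set.Icc 0 τ, α t ^ 2 * g t := by
    refine setIntegral_congr_fun measurableSet_Icc fun t _ => hinner t
  -- integrability of α² g
  have hαg_int : IntegrableOn (fun t => α t ^ 2 * g t) (Set.Icc 0 τ) := by
    refine Integrable.mono' (hαL2.const_mul (Real.exp M))
      ((hαmeas.pow_const 2).aestronglyMeasurable.mul hgmeas.aestronglyMeasurable).restrict
      (Filter.Eventually.of_forall fun t => ?_)
    rw [Real.norm_of_nonneg (mul_nonneg (by positivity) (hgnonneg t))]
    calc α t ^ 2 * g t ≤ α t ^ 2 * Real.exp M := by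
          exact mul_le_mul_of_nonneg_left (le_trans (hgle t) hIle) (by positivity)
      _ = Real.exp M * α t ^ 2 := mul_comm _ _
  have hαnn : 0 ≤ ∫ t in Set.Icc 0 τ, α t ^ 2 :=
    setIntegral_nonneg measurableSet_Icc fun t _ => by positivity
  refine ⟨?_, ?_, ?_⟩
  · rw [houter]
    calc f₀ * (2 * B) ^ p * Real.exp (-M) * ∫ t in Set.Icc 0 τ, α t ^ 2
        = ∫ t in Set.Icc 0 τ, f₀ * (2 * B) ^ p * Real.exp (-M) * α t ^ 2 :=
          (integral_const_mul _ _).symm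
      _ ≤ ∫ t in Set.Icc 0 τ, α t ^ 2 * g t := by
          refine setIntegral_mono_on (hαL2.const_mul _) hαg_int measurableSet_Icc
            fun t ht => ?_
          rw [mul_comm (α t ^ 2) (g t)]
          exact mul_le_mul_of_nonneg_right (hglow t ht) (by positivity)
  · rw [houter]
    calc (∫ t in Set.Icc 0 τ, α t ^ 2 * g t)
        ≤ ∫ t in Set.Icc 0 τ, α t ^ 2 * I := by
          refine setIntegral_mono_on hαg_int (hαL2.mul_const _) measurableSet_Icc
            fun t _ => mul_le_mul_of_nonneg_left (hgle t) (by positivity)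
      _ = I * ∫ t in Set.Icc 0 τ, α t ^ 2 := by
          rw [← integral_const_mul]; simp only [mul_comm]
  · exact mul_le_mul_of_nonneg_right hIle hαnn
end

section
/- Control of the centered empirical process η_n (Proposition 6 of the paper). Fix α_m ∈ L²([0,τ]) ∩ L^∞([0,τ]) and define, for α ∈ S, η_n(α) = (1/n) Σ_{i=1}^n [ (∫₀^τ α(t) α_m(t) e^{β₀·Z_i} Y_i(t) dt)² − E( (∫₀^τ α(t) α_m(t) e^{β₀·Z} Y(t) dt)² ) ]. Then, under the baseline lower-bound assumption, E[ sup { η_n(α)² : α ∈ S, ‖α‖_det ≤ 1 } ] ≤ (1/n) · E[e^{4 β₀·Z}] ‖α_m‖₂⁴ / (f₀ e^{−B|β₀|₁})². -/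
open MeasureTheory ProbabilityTheory Real

private lemma intOfBdd {X : Type*} [MeasurableSpace X] {μ : Measure X} [IsFiniteMeasure μ]
    {f : X → ℝ} (hf : AEStronglyMeasurable f μ) {C : ℝ} (hbd : ∀ᵐ x ∂μ, |f x| ≤ C) :
    Integrable f μ :=
  Integrable.mono' (integrable_const C) hf (by simpa [Real.norm_eq_abs] using hbd)

private lemma intSqOfBdd {X : Type*} [MeasurableSpace X] {μ : Measure X} [IsFiniteMeasure μ]
    {f : X → ℝ} (hf : AEStronglyMeasurable f μ) {C : ℝ} (hbd : ∀ᵐ x ∂μ, |f x| ≤ C) :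
    Integrable (fun x => f x ^ 2) μ := by
  simp_rw [pow_two]
  refine intOfBdd (hf.mul hf) (C := C ^ 2) ?_
  filter_upwards [hbd] with x hx
  rw [abs_mul]
  nlinarith [abs_nonneg (f x)]

private lemma intMulOfBdd {X : Type*} [MeasurableSpace X] {μ : Measure X} [IsFiniteMeasure μ]
    {f g : X → ℝ} (hf : AEStronglyMeasurable f μ) (hg : AEStronglyMeasurable g μ)
    {C D : ℝ} (hbf : ∀ᵐ x ∂μ, |f x| ≤ C) (hbg : ∀ᵐ x ∂μ, |g x| ≤ D) :
    Integrable (fun x => f x * g x) μ := by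
  refine intOfBdd (hf.mul hg) (C := C * D) ?_
  filter_upwards [hbf, hbg] with x hx hy
  rw [abs_mul]
  exact mul_le_mul hx hy (abs_nonneg _) ((abs_nonneg _).trans hx)

private lemma sumAbsLe {ι : Type*} [Fintype ι] (β z : ι → ℝ) (B : ℝ)
    (hz : ∀ j, |z j| ≤ B) : |∑ l, β l * z l| ≤ B * ∑ l, |β l| := by
  calc |∑ l, β l * z l| ≤ ∑ l, |β l * z l| := Finset.abs_sum_le_sum_abs _ _
    _ ≤ ∑ l, |β l| * B := Finset.sum_le_sum fun l _ => by
        rw [abs_mul]; exact mul_le_mul_of_nonneg_left (hz l) (abs_nonneg _)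
    _ = B * ∑ l, |β l| := by rw [← Finset.sum_mul]; ring

private lemma bessel_aux {T : Type*} [MeasurableSpace T] {μ : Measure T} [IsFiniteMeasure μ]
    {J : Type*} [Fintype J] [DecidableEq J] {φ : J → T → ℝ}
    (hφmeas : ∀ j, Measurable (φ j))
    (hφortho : ∀ j k, (∫ t, φ j t * φ k t ∂μ) = if j = k then 1 else 0)
    {v : T → ℝ} (hv : Measurable v) {M : ℝ} (hvb : ∀ t, |v t| ≤ M) :
    ∑ j, (∫ t, φ j t * v t ∂μ) ^ 2 ≤ ∫ t, v t ^ 2 ∂μ := by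
  classical
  -- integrability of products of the φ's
  have hφsq : ∀ j, Integrable (fun t => φ j t * φ j t) μ := by
    intro j
    by_contra h
    have h1 := hφortho j j
    rw [integral_undef h] at h1
    simp at h1
  have hφmul : ∀ j k, Integrable (fun t => φ j t * φ k t) μ := by
    intro j k
    refine Integrable.mono' (((hφsq j).add (hφsq k)).div_const 2)
      ((hφmeas j).mul (hφmeas k)).aestronglyMeasurable (Filter.Eventually.of_forall fun t => ?_)
    have h1 := sq_nonneg (|φ j t| - |φ k t|)
    have h2 := abs_mul (φ j t) (φ k t)
    have h3 := abs_mul_abs_self (φ j t)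
    have h4 := abs_mul_abs_self (φ k t)
    simp only [Real.norm_eq_abs, Pi.add_apply]
    nlinarith [abs_nonneg (φ j t * φ k t)]
  have hv2 : Integrable (fun t => v t ^ 2) μ :=
    intSqOfBdd hv.aestronglyMeasurable (Filter.Eventually.of_forall hvb)
  have hφv : ∀ j, Integrable (fun t => φ j t * v t) μ := by
    intro j
    refine Integrable.mono' (((hφsq j).add hv2).div_const 2)
      ((hφmeas j).mul hv).aestronglyMeasurable (Filter.Eventually.of_forall fun t => ?_)
    have h1 := sq_nonneg (|φ j t| - |v t|)
    have h2 := abs_mul (φ j t) (v t)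
    have h3 := abs_mul_abs_self (φ j t)
    have h4 := sq_abs (v t)
    simp only [Real.norm_eq_abs, Pi.add_apply]
    nlinarith [abs_nonneg (φ j t * v t)]
  set c : J → ℝ := fun j => ∫ t, φ j t * v t ∂μ with hc
  set S : T → ℝ := fun t => ∑ j, c j * φ j t with hS
  have hS2 : ∀ t, S t ^ 2 = ∑ j, ∑ k, (c j * c k) * (φ j t * φ k t) := by
    intro t
    rw [sq, hS, Finset.sum_mul_sum]
    exact Finset.sum_congr rfl fun j _ => Finset.sum_congr rfl fun k _ => by ring
  have hS2int : Integrable (fun t => S t ^ 2) μ := by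
    refine (integrable_finset_sum _ fun j _ => integrable_finset_sum _ fun k _ =>
      ((hφmul j k).const_mul (c j * c k))).congr
      (Filter.Eventually.of_forall fun t => (hS2 t).symm)
  have hvS : ∀ t, v t * S t = ∑ j, c j * (φ j t * v t) := by
    intro t
    rw [hS, Finset.mul_sum]
    exact Finset.sum_congr rfl fun j _ => by ring
  have hvSint : Integrable (fun t => v t * S t) μ := by
    refine (integrable_finset_sum _ fun j _ => ((hφv j).const_mul (c j))).congr
      (Filter.Eventually.of_forall fun t => (hvS t).symm)
  have hvSval : (∫ t, v t * S t ∂μ) = ∑ j, c j ^ 2 := by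
    rw [integral_congr_ae (Filter.Eventually.of_forall hvS),
      integral_finset_sum _ fun j _ => ((hφv j).const_mul (c j))]
    exact Finset.sum_congr rfl fun j _ => by simp [integral_const_mul, hc, sq]
  have hS2val : (∫ t, S t ^ 2 ∂μ) = ∑ j, c j ^ 2 := by
    rw [integral_congr_ae (Filter.Eventually.of_forall hS2),
      integral_finset_sum _ fun j _ => integrable_finset_sum _ fun k _ =>
        ((hφmul j k).const_mul (c j * c k))]
    refine Finset.sum_congr rfl fun j _ => ?_
    rw [integral_finset_sum _ fun k _ => ((hφmul j k).const_mul (c j * c k))]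
    simp only [integral_const_mul, hφortho, mul_ite, mul_one, mul_zero]
    rw [Finset.sum_ite_eq Finset.univ j (fun k => c j * c k)]
    simp [sq]
  have key : (0:ℝ) ≤ ∫ t, (v t - S t) ^ 2 ∂μ := integral_nonneg fun t => sq_nonneg _
  have hid : ∀ t, (v t - S t) ^ 2 = v t ^ 2 - 2 * (v t * S t) + S t ^ 2 := fun t => by ring
  have hsubint : Integrable (fun t => v t ^ 2 - 2 * (v t * S t)) μ :=
    hv2.sub (hvSint.const_mul 2)
  rw [integral_congr_ae (Filter.Eventually.of_forall hid),
    integral_add hsubint hS2int,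
    integral_sub hv2 (hvSint.const_mul 2), integral_const_mul, hvSval, hS2val] at key
  have : ∑ j, (∫ t, φ j t * v t ∂μ) ^ 2 = ∑ j, c j ^ 2 := rfl
  linarith [this ▸ key]

private lemma swap_aux {Ω : Type*} [MeasureSpace Ω] [IsProbabilityMeasure (ℙ : Measure Ω)]
    {T : Type*} [MeasurableSpace T] {ν : Measure T} [IsFiniteMeasure ν]
    {K : Ω → ℝ} (hK : Measurable K) {C : ℝ} (hKb : ∀ᵐ ω ∂(ℙ : Measure Ω), |K ω| ≤ C)
    {P : Ω → T → ℝ} (hP : Measurable fun q : Ω × T => P q.1 q.2)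
    (hPb : ∀ ω t, |P ω t| ≤ 1)
    {w : T → ℝ} (hwm : Measurable w) (hw : Integrable w ν) :
    ∫ ω, K ω * ∫ t, w t * P ω t ∂ν
      = ∫ t, (w t * ∫ ω, K ω * P ω t) ∂ν := by
  have hFmeas : Measurable fun q : Ω × T => K q.1 * (w q.2 * P q.1 q.2) :=
    (hK.comp measurable_fst).mul ((hwm.comp measurable_snd).mul hP)
  have hbd_prod : ∀ᵐ q ∂((ℙ : Measure Ω).prod ν), |K q.1| ≤ C := by
    rw [ae_iff]
    have hset : {q : Ω × T | ¬ |K q.1| ≤ C} = {ω : Ω | ¬ |K ω| ≤ C} ×ˢ (Set.univ : Set T) := by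
      ext q; simp [Set.mem_prod]
    rw [hset, Measure.prod_prod]
    rw [ae_iff] at hKb
    rw [hKb, zero_mul]
  have hFint : Integrable (Function.uncurry fun ω t => K ω * (w t * P ω t))
      ((ℙ : Measure Ω).prod ν) := by
    refine Integrable.mono' ((integrable_const |C|).mul_prod hw.norm)
      hFmeas.aestronglyMeasurable ?_
    filter_upwards [hbd_prod] with q hq
    have h1 : |K q.1 * (w q.2 * P q.1 q.2)| = |K q.1| * (|w q.2| * |P q.1 q.2|) := by
      rw [abs_mul, abs_mul]
    rw [Function.uncurry, Real.norm_eq_abs, h1, Real.norm_eq_abs]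
    calc |K q.1| * (|w q.2| * |P q.1 q.2|) ≤ |C| * (|w q.2| * 1) := by
          refine mul_le_mul (hq.trans (le_abs_self C)) ?_ (by positivity) (abs_nonneg C)
          exact mul_le_mul_of_nonneg_left (hPb q.1 q.2) (abs_nonneg _)
      _ = |C| * |w q.2| := by ring
  calc ∫ ω, K ω * ∫ t, w t * P ω t ∂ν
      = ∫ ω, ∫ t, K ω * (w t * P ω t) ∂ν := by
        refine integral_congr_ae (Filter.Eventually.of_forall fun ω => ?_)
        simp only [integral_const_mul]
    _ = ∫ t, (∫ ω, K ω * (w t * P ω t)) ∂ν := integral_integral_swap hFint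
    _ = ∫ t, (w t * ∫ ω, K ω * P ω t) ∂ν := by
        refine integral_congr_ae (Filter.Eventually.of_forall fun t => ?_)
        have h1 : (∫ ω, K ω * (w t * P ω t)) = ∫ ω, w t * (K ω * P ω t) :=
          integral_congr_ae (Filter.Eventually.of_forall fun ω => by ring)
        simp only [h1, integral_const_mul]

set_option maxHeartbeats 2000000 in
/-- Proposition 6 of the paper. -/
theorem stmt_1
    {Ω : Type*} [MeasureSpace Ω] [IsProbabilityMeasure (ℙ : Measure Ω)]
    (τ B f₀ : ℝ) (hτ : 0 < τ) (hB : 0 < B) (hf₀ : 0 < f₀)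
    (p n : ℕ) (hn : 1 ≤ n) (β₀ : Fin p → ℝ)
    -- the i.i.d. sample (Z_i, Y_i) and a generic pair (Zg, Yg)
    (Z : Fin n → Ω → Fin p → ℝ) (Y : Fin n → Ω → ℝ → ℝ)
    (Zg : Ω → Fin p → ℝ) (Yg : Ω → ℝ → ℝ)
    (hZmeas : ∀ i, Measurable (Z i))
    (hZgmeas : Measurable Zg)
    (hYmeas : ∀ i, Measurable (fun q : Ω × ℝ => Y i q.1 q.2))
    (hYgmeas : Measurable (fun q : Ω × ℝ => Yg q.1 q.2))
    (hZbd : ∀ i, ∀ᵐ ω ∂ℙ, ∀ j, |Z i ω j| ≤ B)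
    (hY01 : ∀ i ω t, Y i ω t ∈ Set.Icc (0 : ℝ) 1)
    (hYg01 : ∀ ω t, Yg ω t ∈ Set.Icc (0 : ℝ) 1)
    -- identically distributed as the generic pair
    (hident : ∀ i,
      Measure.map (fun ω => (Z i ω, Y i ω)) ℙ
        = Measure.map (fun ω => (Zg ω, Yg ω)) ℙ)
    -- independent
    (hindep : iIndepFun
      (fun i ω => (Z i ω, Y i ω)) ℙ)
    -- the orthonormal family (φ_j) spanning S
    (J : Type*) [Fintype J] [DecidableEq J] (φ : J → ℝ → ℝ)
    (hφmeas : ∀ j, Measurable (φ j))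
    (hφortho : ∀ j k, (∫ t in Set.Icc 0 τ, φ j t * φ k t)
      = if j = k then 1 else 0)
    -- the baseline lower-bound assumption on S
    (hlow : ∀ a : J → ℝ,
      f₀ * Real.exp (-(B * ∑ j, |β₀ j|)) *
          (∫ t in Set.Icc 0 τ, (∑ j, a j * φ j t) ^ 2)
        ≤ ∫ t in Set.Icc 0 τ, (∑ j, a j * φ j t) ^ 2 *
            ∫ ω, Real.exp (∑ l, β₀ l * Zg ω l) * Yg ω t)
    -- the fixed function α_m ∈ L² ∩ L^∞([0,τ])
    (αm : ℝ → ℝ) (hαmmeas : Measurable αm)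
    (hαmbdd : ∃ M : ℝ, ∀ t, |αm t| ≤ M) :
    (∫ ω, sSup {x : ℝ | ∃ a : J → ℝ,
        (∫ t in Set.Icc 0 τ, (∑ j, a j * φ j t) ^ 2 *
            ∫ ω', Real.exp (∑ l, β₀ l * Zg ω' l) * Yg ω' t) ≤ 1 ∧
        x = ((n : ℝ)⁻¹ * ∑ i,
          ((∫ t in Set.Icc 0 τ, (∑ j, a j * φ j t) * αm t *
              Real.exp (∑ l, β₀ l * Z i ω l) * Y i ω t) ^ 2
            - ∫ ω', (∫ t in Set.Icc 0 τ, (∑ j, a j * φ j t) * αm t *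
                Real.exp (∑ l, β₀ l * Zg ω' l) * Yg ω' t) ^ 2)) ^ 2})
      ≤ (n : ℝ)⁻¹ * (∫ ω, Real.exp (4 * ∑ l, β₀ l * Zg ω l)) *
          (∫ t in Set.Icc 0 τ, αm t ^ 2) ^ 2 /
          (f₀ * Real.exp (-(B * ∑ j, |β₀ j|))) ^ 2 := by
  classical
  obtain ⟨M, hM⟩ := hαmbdd
  have hM0 : 0 ≤ M := le_trans (abs_nonneg _) (hM 0)
  set μ : Measure ℝ := volume.restrict (Set.Icc 0 τ) with hμdef
  haveI : IsFiniteMeasure μ := by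
    constructor
    rw [hμdef, Measure.restrict_apply_univ, Real.volume_Icc]
    exact ENNReal.ofReal_lt_top
  have hnpos : (0:ℝ) < n := by exact_mod_cast Nat.lt_of_lt_of_le Nat.zero_lt_one hn
  have hn0 : (n:ℝ) ≠ 0 := ne_of_gt hnpos
  set c : ℝ := f₀ * Real.exp (-(B * ∑ j, |β₀ j|)) with hcdef
  have hcpos : 0 < c := mul_pos hf₀ (Real.exp_pos _)
  set Eb : ℝ := Real.exp (B * ∑ l, |β₀ l|) with hEbdef
  have hEbpos : 0 < Eb := Real.exp_pos _
  set Q : ℝ := ∫ t, αm t ^ 2 ∂μ with hQdef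
  have hQ0 : 0 ≤ Q := integral_nonneg fun t => sq_nonneg _
  set E4 : ℝ := ∫ ω, Real.exp (4 * ∑ l, β₀ l * Zg ω l) with hE4def
  have hE40 : 0 ≤ E4 := integral_nonneg fun ω => (Real.exp_pos _).le
  -- basic bounds on Y
  have hY1 : ∀ i ω t, |Y i ω t| ≤ 1 := fun i ω t =>
    abs_le.2 ⟨by linarith [(hY01 i ω t).1], (hY01 i ω t).2⟩
  have hYg1 : ∀ ω t, |Yg ω t| ≤ 1 := fun ω t =>
    abs_le.2 ⟨by linarith [(hYg01 ω t).1], (hYg01 ω t).2⟩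
  -- integrability facts for the φ's on μ
  have hφsq : ∀ j, Integrable (fun t => φ j t * φ j t) μ := by
    intro j
    by_contra h
    have h1 := hφortho j j
    rw [integral_undef h] at h1
    simp at h1
  have hφmul : ∀ j k, Integrable (fun t => φ j t * φ k t) μ := by
    intro j k
    refine Integrable.mono' (((hφsq j).add (hφsq k)).div_const 2)
      ((hφmeas j).mul (hφmeas k)).aestronglyMeasurable (Filter.Eventually.of_forall fun t => ?_)
    have h1 := sq_nonneg (|φ j t| - |φ k t|)
    have h2 := abs_mul (φ j t) (φ k t)
    have h3 := abs_mul_abs_self (φ j t)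
    have h4 := abs_mul_abs_self (φ k t)
    simp only [Real.norm_eq_abs, Pi.add_apply]
    nlinarith [abs_nonneg (φ j t * φ k t)]
  have hφL1 : ∀ j, Integrable (φ j) μ := by
    intro j
    refine Integrable.mono' (((integrable_const (1:ℝ)).add (hφsq j)).div_const 2)
      (hφmeas j).aestronglyMeasurable (Filter.Eventually.of_forall fun t => ?_)
    have h1 := sq_nonneg (|φ j t| - 1)
    have h3 := abs_mul_abs_self (φ j t)
    simp only [Real.norm_eq_abs, Pi.add_apply]
    nlinarith [abs_nonneg (φ j t)]
  have hφabs : ∀ j, Integrable (fun t => |φ j t|) μ := fun j => (hφL1 j).abs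
  have hαm2 : Integrable (fun t => αm t ^ 2) μ :=
    intSqOfBdd hαmmeas.aestronglyMeasurable (Filter.Eventually.of_forall hM)
  have humeas : ∀ j, Measurable fun t => φ j t * αm t := fun j => (hφmeas j).mul hαmmeas
  have huint : ∀ j, Integrable (fun t => φ j t * αm t) μ := by
    intro j
    refine Integrable.mono' ((hφabs j).mul_const M)
      (humeas j).aestronglyMeasurable (Filter.Eventually.of_forall fun t => ?_)
    rw [Real.norm_eq_abs, abs_mul]
    exact mul_le_mul_of_nonneg_left (hM t) (abs_nonneg _)
  -- integrability of the basic t-integrands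
  have hbase : ∀ (E : ℝ) (U : ℝ → ℝ), Measurable U → (∀ t, |U t| ≤ 1) → ∀ j,
      Integrable (fun t => φ j t * αm t * E * U t) μ := by
    intro E U hU hU1 j
    refine Integrable.mono' ((hφabs j).mul_const (M * |E|))
      ((((hφmeas j).mul hαmmeas).mul_const E).mul hU).aestronglyMeasurable
      (Filter.Eventually.of_forall fun t => ?_)
    rw [Real.norm_eq_abs]
    calc |φ j t * αm t * E * U t| = (|φ j t| * |E|) * (|αm t| * |U t|) := by
          rw [abs_mul, abs_mul, abs_mul]; ring
      _ ≤ (|φ j t| * |E|) * (M * 1) := by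
          refine mul_le_mul_of_nonneg_left
            (mul_le_mul (hM t) (hU1 t) (abs_nonneg _) hM0) (by positivity)
      _ = |φ j t| * (M * |E|) := by ring
  -- linearity of the t-integral in the coefficients a
  have hlin : ∀ (a : J → ℝ) (E : ℝ) (U : ℝ → ℝ), Measurable U → (∀ t, |U t| ≤ 1) →
      (∫ t, (∑ j, a j * φ j t) * αm t * E * U t ∂μ)
        = ∑ j, a j * ∫ t, φ j t * αm t * E * U t ∂μ := by
    intro a E U hU hU1
    have h1 : ∀ t, (∑ j, a j * φ j t) * αm t * E * U t
        = ∑ j, a j * (φ j t * αm t * E * U t) := by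
      intro t
      rw [Finset.sum_mul, Finset.sum_mul, Finset.sum_mul]
      exact Finset.sum_congr rfl fun j _ => by ring
    rw [integral_congr_ae (Filter.Eventually.of_forall h1),
      integral_finset_sum _ fun j _ => (hbase E U hU hU1 j).const_mul (a j)]
    exact Finset.sum_congr rfl fun j _ => integral_const_mul _ _
  -- orthonormal expansion
  have hA2 : ∀ a : J → ℝ, (∫ t, (∑ j, a j * φ j t) ^ 2 ∂μ) = ∑ j, a j ^ 2 := by
    intro a
    have h1 : ∀ t, (∑ j, a j * φ j t) ^ 2 = ∑ j, ∑ k, (a j * a k) * (φ j t * φ k t) := by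
      intro t
      rw [sq, Finset.sum_mul_sum]
      exact Finset.sum_congr rfl fun j _ => Finset.sum_congr rfl fun k _ => by ring
    rw [integral_congr_ae (Filter.Eventually.of_forall h1),
      integral_finset_sum _ fun j _ => integrable_finset_sum _ fun k _ =>
        (hφmul j k).const_mul (a j * a k)]
    refine Finset.sum_congr rfl fun j _ => ?_
    rw [integral_finset_sum _ fun k _ => (hφmul j k).const_mul (a j * a k)]
    simp only [integral_const_mul, hφortho, mul_ite, mul_one, mul_zero]
    rw [Finset.sum_ite_eq Finset.univ j (fun k => a j * a k)]
    simp [sq]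
  -- section measurability of Y
  have hYsec : ∀ i ω, Measurable fun t => Y i ω t :=
    fun i ω => (hYmeas i).comp measurable_prodMk_left
  have hYgsec : ∀ ω, Measurable fun t => Yg ω t :=
    fun ω => hYgmeas.comp measurable_prodMk_left
  -- measurability of the exponential factors
  have hsummeas : ∀ i, Measurable fun ω => ∑ l, β₀ l * Z i ω l := fun i =>
    Finset.measurable_sum _ fun l _ => ((measurable_pi_apply l).comp (hZmeas i)).const_mul (β₀ l)
  have hsumgmeas : Measurable fun ω => ∑ l, β₀ l * Zg ω l :=
    Finset.measurable_sum _ fun l _ => ((measurable_pi_apply l).comp hZgmeas).const_mul (β₀ l)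
  have hexpmeas : ∀ i, Measurable fun ω => Real.exp (∑ l, β₀ l * Z i ω l) :=
    fun i => Real.measurable_exp.comp (hsummeas i)
  have hexpgmeas : Measurable fun ω => Real.exp (∑ l, β₀ l * Zg ω l) :=
    Real.measurable_exp.comp hsumgmeas
  -- measurability of the pairs
  have hpairmeas : ∀ i, Measurable fun ω => (Z i ω, Y i ω) := fun i =>
    (hZmeas i).prodMk (measurable_pi_lambda _ fun t =>
      (hYmeas i).comp (measurable_id.prodMk measurable_const))
  have hpairgmeas : Measurable fun ω => (Zg ω, Yg ω) :=
    hZgmeas.prodMk (measurable_pi_lambda _ fun t =>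
      hYgmeas.comp (measurable_id.prodMk measurable_const))
  -- a.s. boundedness of Zg
  have hZgbd : ∀ᵐ ω ∂(ℙ : Measure Ω), ∀ j, |Zg ω j| ≤ B := by
    have hA : MeasurableSet {zy : (Fin p → ℝ) × (ℝ → ℝ) | ∀ j, |zy.1 j| ≤ B} := by
      have : {zy : (Fin p → ℝ) × (ℝ → ℝ) | ∀ j, |zy.1 j| ≤ B}
          = ⋂ j, {zy : (Fin p → ℝ) × (ℝ → ℝ) | |zy.1 j| ≤ B} := by
        ext zy; simp
      rw [this]
      exact MeasurableSet.iInter fun j =>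
        measurableSet_le (by fun_prop) measurable_const
    have i0 : Fin n := ⟨0, hn⟩
    rw [ae_iff]
    have h1 : {ω | ¬ ∀ j, |Zg ω j| ≤ B}
        = (fun ω => (Zg ω, Yg ω)) ⁻¹' {zy : (Fin p → ℝ) × (ℝ → ℝ) | ∀ j, |zy.1 j| ≤ B}ᶜ := by
      ext ω; simp
    rw [h1, ← Measure.map_apply hpairgmeas hA.compl, ← hident i0,
      Measure.map_apply (hpairmeas i0) hA.compl]
    have h2 := hZbd i0
    rw [ae_iff] at h2
    rw [show (fun ω => (Z i0 ω, Y i0 ω)) ⁻¹' {zy : (Fin p → ℝ) × (ℝ → ℝ) | ∀ j, |zy.1 j| ≤ B}ᶜ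
        = {ω | ¬ ∀ j, |Z i0 ω j| ≤ B} from by ext ω; simp]
    exact h2
  -- a.s. bounds on the exponentials
  have hKb : ∀ i, ∀ᵐ ω ∂(ℙ : Measure Ω), Real.exp (∑ l, β₀ l * Z i ω l) ≤ Eb := by
    intro i
    filter_upwards [hZbd i] with ω hω
    exact Real.exp_le_exp.2 ((le_abs_self _).trans (sumAbsLe β₀ (Z i ω) B hω))
  have hKgb : ∀ᵐ ω ∂(ℙ : Measure Ω), Real.exp (∑ l, β₀ l * Zg ω l) ≤ Eb := by
    filter_upwards [hZgbd] with ω hω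
    exact Real.exp_le_exp.2 ((le_abs_self _).trans (sumAbsLe β₀ (Zg ω) B hω))
  -- the coordinate functionals ψ
  set ψ : Fin n → Ω → J → ℝ := fun i ω j =>
    ∫ t, φ j t * αm t * Real.exp (∑ l, β₀ l * Z i ω l) * Y i ω t ∂μ with hψdef
  set ψg : Ω → J → ℝ := fun ω j =>
    ∫ t, φ j t * αm t * Real.exp (∑ l, β₀ l * Zg ω l) * Yg ω t ∂μ with hψgdef
  have hψmeas : ∀ i j, Measurable fun ω => ψ i ω j := by
    intro i j
    simp only [hψdef]
    have hjoint : Measurable fun q : Ω × ℝ =>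
        φ j q.2 * αm q.2 * Real.exp (∑ l, β₀ l * Z i q.1 l) * Y i q.1 q.2 :=
      ((((hφmeas j).comp measurable_snd).mul (hαmmeas.comp measurable_snd)).mul
        ((hexpmeas i).comp measurable_fst)).mul (hYmeas i)
    exact hjoint.stronglyMeasurable.integral_prod_right'.measurable
  have hψgmeas : ∀ j, Measurable fun ω => ψg ω j := by
    intro j
    simp only [hψgdef]
    have hjoint : Measurable fun q : Ω × ℝ =>
        φ j q.2 * αm q.2 * Real.exp (∑ l, β₀ l * Zg q.1 l) * Yg q.1 q.2 :=
      ((((hφmeas j).comp measurable_snd).mul (hαmmeas.comp measurable_snd)).mul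
        (hexpgmeas.comp measurable_fst)).mul hYgmeas
    exact hjoint.stronglyMeasurable.integral_prod_right'.measurable
  -- bounds on ψ
  set Cψ : J → ℝ := fun j => Eb * (M * ∫ t, |φ j t| ∂μ) with hCψdef
  have hCψ0 : ∀ j, 0 ≤ Cψ j := fun j => by
    have : 0 ≤ ∫ t, |φ j t| ∂μ := integral_nonneg fun t => abs_nonneg _
    rw [hCψdef]
    positivity
  have hψbdgen : ∀ (E : ℝ) (U : ℝ → ℝ), Measurable U → (∀ t, |U t| ≤ 1) →
      0 ≤ E → E ≤ Eb → ∀ j,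
      |∫ t, φ j t * αm t * E * U t ∂μ| ≤ Cψ j := by
    intro E U hU hU1 hE0 hEEb j
    calc |∫ t, φ j t * αm t * E * U t ∂μ| ≤ ∫ t, |φ j t * αm t * E * U t| ∂μ := by
          simpa only [Real.norm_eq_abs] using
            norm_integral_le_integral_norm (μ := μ) (fun t => φ j t * αm t * E * U t)
      _ ≤ ∫ t, |φ j t| * (M * Eb) ∂μ := by
          refine integral_mono (hbase E U hU hU1 j).abs ((hφabs j).mul_const (M * Eb))
            fun t => ?_
          calc |φ j t * αm t * E * U t| = (|φ j t|) * (|αm t| * |U t| * |E|) := by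
                rw [abs_mul, abs_mul, abs_mul]; ring
            _ ≤ |φ j t| * (M * 1 * Eb) := by
                refine mul_le_mul_of_nonneg_left ?_ (abs_nonneg _)
                refine mul_le_mul (mul_le_mul (hM t) (hU1 t) (abs_nonneg _) hM0) ?_
                  (abs_nonneg _) (by positivity)
                rw [abs_of_nonneg hE0]; exact hEEb
            _ = |φ j t| * (M * Eb) := by ring
      _ = Cψ j := by rw [integral_mul_const, hCψdef]; ring
  have hψbd : ∀ i, ∀ᵐ ω ∂(ℙ : Measure Ω), ∀ j, |ψ i ω j| ≤ Cψ j := by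
    intro i
    filter_upwards [hKb i] with ω hω j
    simp only [hψdef]
    exact hψbdgen _ _ (hYsec i ω) (hY1 i ω) (Real.exp_pos _).le hω j
  have hψgbd : ∀ᵐ ω ∂(ℙ : Measure Ω), ∀ j, |ψg ω j| ≤ Cψ j := by
    filter_upwards [hKgb] with ω hω j
    simp only [hψgdef]
    exact hψbdgen _ _ (hYgsec ω) (hYg1 ω) (Real.exp_pos _).le hω j
  -- integrability of products of ψ's
  have hWbd : ∀ i j k, ∀ᵐ ω ∂(ℙ : Measure Ω), |ψ i ω j * ψ i ω k| ≤ Cψ j * Cψ k := by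
    intro i j k
    filter_upwards [hψbd i] with ω hω
    rw [abs_mul]
    exact mul_le_mul (hω j) (hω k) (abs_nonneg _) (hCψ0 j)
  have hWgbd : ∀ j k, ∀ᵐ ω ∂(ℙ : Measure Ω), |ψg ω j * ψg ω k| ≤ Cψ j * Cψ k := by
    intro j k
    filter_upwards [hψgbd] with ω hω
    rw [abs_mul]
    exact mul_le_mul (hω j) (hω k) (abs_nonneg _) (hCψ0 j)
  have hWint : ∀ i j k, Integrable (fun ω => ψ i ω j * ψ i ω k) (ℙ : Measure Ω) :=
    fun i j k => intOfBdd ((hψmeas i j).mul (hψmeas i k)).aestronglyMeasurable (hWbd i j k)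
  have hWgint : ∀ j k, Integrable (fun ω => ψg ω j * ψg ω k) (ℙ : Measure Ω) :=
    fun j k => intOfBdd ((hψgmeas j).mul (hψgmeas k)).aestronglyMeasurable (hWgbd j k)
  have hW2int : ∀ i j k, Integrable (fun ω => (ψ i ω j * ψ i ω k) ^ 2) (ℙ : Measure Ω) :=
    fun i j k => intSqOfBdd ((hψmeas i j).mul (hψmeas i k)).aestronglyMeasurable (hWbd i j k)
  -- the mean matrix and the centered empirical matrix
  set m : J → J → ℝ := fun j k => ∫ ω, ψg ω j * ψg ω k with hmdef
  set Dm : Ω → J → J → ℝ := fun ω j k =>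
    (n:ℝ)⁻¹ * ∑ i, (ψ i ω j * ψ i ω k - m j k) with hDmdef
  have hDmmeas : ∀ j k, Measurable fun ω => Dm ω j k := by
    intro j k
    simp only [hDmdef]
    exact (Finset.measurable_sum _ fun i _ =>
      ((hψmeas i j).mul (hψmeas i k)).sub measurable_const).const_mul _
  have hDmbd : ∀ j k, ∀ᵐ ω ∂(ℙ : Measure Ω),
      |Dm ω j k| ≤ (n:ℝ)⁻¹ * ∑ _i : Fin n, (Cψ j * Cψ k + |m j k|) := by
    intro j k
    have h := fun i => hWbd i j k
    rw [← ae_all_iff] at h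
    filter_upwards [h] with ω hω
    simp only [hDmdef]
    rw [abs_mul, abs_of_nonneg (by positivity : (0:ℝ) ≤ (n:ℝ)⁻¹)]
    refine mul_le_mul_of_nonneg_left ?_ (by positivity)
    refine (Finset.abs_sum_le_sum_abs _ _).trans (Finset.sum_le_sum fun i _ => ?_)
    calc |ψ i ω j * ψ i ω k - m j k| ≤ |ψ i ω j * ψ i ω k| + |m j k| := abs_sub _ _
      _ ≤ Cψ j * Cψ k + |m j k| := add_le_add_left (hω i) _
  have hDm2int : ∀ j k, Integrable (fun ω => Dm ω j k ^ 2) (ℙ : Measure Ω) :=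
    fun j k => intSqOfBdd (hDmmeas j k).aestronglyMeasurable (hDmbd j k)
  -- Step A : pointwise bound on the supremum
  have hsum2 : ∀ a : J → ℝ,
      (∫ t, ((∑ j, a j * φ j t) ^ 2 *
          ∫ ω', Real.exp (∑ l, β₀ l * Zg ω' l) * Yg ω' t) ∂μ) ≤ 1 →
      ∑ j, a j ^ 2 ≤ c⁻¹ := by
    intro a hcon
    have h := (hlow a).trans hcon
    rw [hA2 a] at h
    calc ∑ j, a j ^ 2 = c⁻¹ * (c * ∑ j, a j ^ 2) := by field_simp
      _ ≤ c⁻¹ * 1 := mul_le_mul_of_nonneg_left h (inv_nonneg.2 hcpos.le)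
      _ = c⁻¹ := mul_one _
  have hsupb : ∀ ω : Ω, sSup {x : ℝ | ∃ a : J → ℝ,
      (∫ t, ((∑ j, a j * φ j t) ^ 2 *
          ∫ ω', Real.exp (∑ l, β₀ l * Zg ω' l) * Yg ω' t) ∂μ) ≤ 1 ∧
      x = ((n : ℝ)⁻¹ * ∑ i,
        ((∫ t, (∑ j, a j * φ j t) * αm t *
            Real.exp (∑ l, β₀ l * Z i ω l) * Y i ω t ∂μ) ^ 2
          - ∫ ω', (∫ t, (∑ j, a j * φ j t) * αm t *
              Real.exp (∑ l, β₀ l * Zg ω' l) * Yg ω' t ∂μ) ^ 2)) ^ 2}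
      ≤ c⁻¹ ^ 2 * ∑ j, ∑ k, Dm ω j k ^ 2 := by
    intro ω
    have hbdnn : (0:ℝ) ≤ c⁻¹ ^ 2 * ∑ j, ∑ k, Dm ω j k ^ 2 := by
      have : (0:ℝ) ≤ ∑ j, ∑ k, Dm ω j k ^ 2 :=
        Finset.sum_nonneg fun j _ => Finset.sum_nonneg fun k _ => sq_nonneg _
      positivity
    refine Real.sSup_le ?_ hbdnn
    intro x hx
    obtain ⟨a, hcon, rfl⟩ := hx
    have e1 : ∀ i : Fin n, (∫ t, (∑ j, a j * φ j t) * αm t *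
        Real.exp (∑ l, β₀ l * Z i ω l) * Y i ω t ∂μ) = ∑ j, a j * ψ i ω j := by
      intro i
      simp only [hψdef]
      exact hlin a _ _ (hYsec i ω) (hY1 i ω)
    have e1g : ∀ ω' : Ω, (∫ t, (∑ j, a j * φ j t) * αm t *
        Real.exp (∑ l, β₀ l * Zg ω' l) * Yg ω' t ∂μ) = ∑ j, a j * ψg ω' j := by
      intro ω'
      simp only [hψgdef]
      exact hlin a _ _ (hYgsec ω') (hYg1 ω')
    have e2 : ∀ i : Fin n, (∫ t, (∑ j, a j * φ j t) * αm t *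
        Real.exp (∑ l, β₀ l * Z i ω l) * Y i ω t ∂μ) ^ 2
        = ∑ j, ∑ k, (a j * a k) * (ψ i ω j * ψ i ω k) := by
      intro i
      rw [e1 i, sq, Finset.sum_mul_sum]
      exact Finset.sum_congr rfl fun j _ => Finset.sum_congr rfl fun k _ => by ring
    have e3 : (∫ ω', (∫ t, (∑ j, a j * φ j t) * αm t *
        Real.exp (∑ l, β₀ l * Zg ω' l) * Yg ω' t ∂μ) ^ 2)
        = ∑ j, ∑ k, (a j * a k) * m j k := by
      have h1 : ∀ ω' : Ω, (∫ t, (∑ j, a j * φ j t) * αm t *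
          Real.exp (∑ l, β₀ l * Zg ω' l) * Yg ω' t ∂μ) ^ 2
          = ∑ j, ∑ k, (a j * a k) * (ψg ω' j * ψg ω' k) := by
        intro ω'
        rw [e1g ω', sq, Finset.sum_mul_sum]
        exact Finset.sum_congr rfl fun j _ => Finset.sum_congr rfl fun k _ => by ring
      rw [integral_congr_ae (Filter.Eventually.of_forall h1),
        integral_finset_sum _ fun j _ => integrable_finset_sum _ fun k _ =>
          ((hWgint j k).const_mul (a j * a k))]
      refine Finset.sum_congr rfl fun j _ => ?_
      rw [integral_finset_sum _ fun k _ => ((hWgint j k).const_mul (a j * a k))]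
      refine Finset.sum_congr rfl fun k _ => ?_
      rw [integral_const_mul]
    have e4 : ((n : ℝ)⁻¹ * ∑ i,
        ((∫ t, (∑ j, a j * φ j t) * αm t *
            Real.exp (∑ l, β₀ l * Z i ω l) * Y i ω t ∂μ) ^ 2
          - ∫ ω', (∫ t, (∑ j, a j * φ j t) * αm t *
              Real.exp (∑ l, β₀ l * Zg ω' l) * Yg ω' t ∂μ) ^ 2))
        = ∑ j, ∑ k, (a j * a k) * Dm ω j k := by
      have h1 : ∀ i : Fin n, (∫ t, (∑ j, a j * φ j t) * αm t *
            Real.exp (∑ l, β₀ l * Z i ω l) * Y i ω t ∂μ) ^ 2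
          - (∫ ω', (∫ t, (∑ j, a j * φ j t) * αm t *
              Real.exp (∑ l, β₀ l * Zg ω' l) * Yg ω' t ∂μ) ^ 2)
          = ∑ j, ∑ k, (a j * a k) * (ψ i ω j * ψ i ω k - m j k) := by
        intro i
        rw [e2 i, e3, ← Finset.sum_sub_distrib]
        refine Finset.sum_congr rfl fun j _ => ?_
        rw [← Finset.sum_sub_distrib]
        exact Finset.sum_congr rfl fun k _ => (mul_sub _ _ _).symm
      rw [Finset.sum_congr rfl fun i _ => h1 i]
      have h2 : ∑ i : Fin n, ∑ j, ∑ k, (a j * a k) * (ψ i ω j * ψ i ω k - m j k)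
          = ∑ j, ∑ k, ∑ i : Fin n, (a j * a k) * (ψ i ω j * ψ i ω k - m j k) := by
        rw [Finset.sum_comm]
        exact Finset.sum_congr rfl fun j _ => Finset.sum_comm
      rw [h2, Finset.mul_sum]
      refine Finset.sum_congr rfl fun j _ => ?_
      rw [Finset.mul_sum]
      refine Finset.sum_congr rfl fun k _ => ?_
      simp only [hDmdef]
      rw [← Finset.mul_sum]
      ring
    rw [e4]
    have h5 : ∑ j, ∑ k, (a j * a k) * Dm ω j k
        = ∑ q : J × J, (a q.1 * a q.2) * Dm ω q.1 q.2 := by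
      rw [← Finset.univ_product_univ, Finset.sum_product]
    have h6 : ∑ q : J × J, (a q.1 * a q.2) ^ 2 = (∑ j, a j ^ 2) ^ 2 := by
      rw [← Finset.univ_product_univ, Finset.sum_product, sq (∑ j, a j ^ 2),
        Finset.sum_mul_sum]
      exact Finset.sum_congr rfl fun j _ => Finset.sum_congr rfl fun k _ => mul_pow _ _ _
    have h7 : ∑ q : J × J, Dm ω q.1 q.2 ^ 2 = ∑ j, ∑ k, Dm ω j k ^ 2 := by
      rw [← Finset.univ_product_univ, Finset.sum_product]
    have hCS := Finset.sum_mul_sq_le_sq_mul_sq Finset.univ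
      (fun q : J × J => a q.1 * a q.2) (fun q => Dm ω q.1 q.2)
    calc (∑ j, ∑ k, (a j * a k) * Dm ω j k) ^ 2
        = (∑ q : J × J, (a q.1 * a q.2) * Dm ω q.1 q.2) ^ 2 := by rw [h5]
      _ ≤ (∑ q : J × J, (a q.1 * a q.2) ^ 2) * ∑ q : J × J, Dm ω q.1 q.2 ^ 2 := hCS
      _ = (∑ j, a j ^ 2) ^ 2 * ∑ j, ∑ k, Dm ω j k ^ 2 := by rw [h6, h7]
      _ ≤ c⁻¹ ^ 2 * ∑ j, ∑ k, Dm ω j k ^ 2 := by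
          refine mul_le_mul_of_nonneg_right
            (pow_le_pow_left₀ (Finset.sum_nonneg fun j _ => sq_nonneg _) (hsum2 a hcon) 2) ?_
          exact Finset.sum_nonneg fun j _ => Finset.sum_nonneg fun k _ => sq_nonneg _
  -- integrability of the bounding function
  have hGint : Integrable (fun ω => c⁻¹ ^ 2 * ∑ j, ∑ k, Dm ω j k ^ 2) (ℙ : Measure Ω) :=
    (integrable_finset_sum _ fun j _ => integrable_finset_sum _ fun k _ =>
      hDm2int j k).const_mul _
  -- the main second-moment bound (proved below)
  have hmain : ∑ j, ∑ k, ∫ ω, Dm ω j k ^ 2 ≤ (n:ℝ)⁻¹ * E4 * Q ^ 2 := by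
    -- transfer of expectations through the identical-distribution hypothesis
    have htransF : ∀ (i : Fin n) (F : (Fin p → ℝ) × (ℝ → ℝ) → ℝ), Measurable F →
        (∫ ω, F (Z i ω, Y i ω)) = ∫ ω, F (Zg ω, Yg ω) := by
      intro i F hF
      have h1 := integral_map (μ := (ℙ : Measure Ω)) (φ := fun ω => (Z i ω, Y i ω))
        (hpairmeas i).aemeasurable hF.aestronglyMeasurable
      have h2 := integral_map (μ := (ℙ : Measure Ω)) (φ := fun ω => (Zg ω, Yg ω))
        hpairgmeas.aemeasurable hF.aestronglyMeasurable
      rw [← h1, hident i, h2]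
    -- the two-variable weight
    set w2 : J → J → ℝ × ℝ → ℝ := fun j k q =>
      (φ j q.1 * αm q.1) * (φ k q.2 * αm q.2) with hw2def
    have hw2meas : ∀ j k, Measurable (w2 j k) := fun j k =>
      ((humeas j).comp measurable_fst).mul ((humeas k).comp measurable_snd)
    have hw2int : ∀ j k, Integrable (w2 j k) (μ.prod μ) := fun j k =>
      (huint j).mul_prod (huint k)
    -- product representation of ψ·ψ
    have hrep : ∀ (E : ℝ) (U : ℝ → ℝ) (j k : J),
        (∫ t, φ j t * αm t * E * U t ∂μ) * (∫ t, φ k t * αm t * E * U t ∂μ)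
          = E ^ 2 * ∫ q, w2 j k q * (U q.1 * U q.2) ∂(μ.prod μ) := by
      intro E U j k
      have h1 : ∀ j : J, (∫ t, φ j t * αm t * E * U t ∂μ)
          = E * ∫ t, (φ j t * αm t) * U t ∂μ := by
        intro j
        rw [← integral_const_mul]
        exact integral_congr_ae (Filter.Eventually.of_forall fun t => by ring)
      have h2 := integral_prod_mul (μ := μ) (ν := μ)
        (fun t => (φ j t * αm t) * U t) (fun t => (φ k t * αm t) * U t)
      have h3 : (∫ q : ℝ × ℝ, ((φ j q.1 * αm q.1) * U q.1) * ((φ k q.2 * αm q.2) * U q.2)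
            ∂(μ.prod μ))
          = ∫ q, w2 j k q * (U q.1 * U q.2) ∂(μ.prod μ) := by
        refine integral_congr_ae (Filter.Eventually.of_forall fun q => ?_)
        simp only [hw2def]
        ring
      rw [h1 j, h1 k, ← h3, h2]
      ring
    have hWrep : ∀ (i : Fin n) (ω : Ω) (j k : J), ψ i ω j * ψ i ω k
        = Real.exp (∑ l, β₀ l * Z i ω l) ^ 2 *
          ∫ q, w2 j k q * (Y i ω q.1 * Y i ω q.2) ∂(μ.prod μ) := by
      intro i ω j k
      simp only [hψdef]
      exact hrep _ _ j k
    have hWgrep : ∀ (ω : Ω) (j k : J), ψg ω j * ψg ω k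
        = Real.exp (∑ l, β₀ l * Zg ω l) ^ 2 *
          ∫ q, w2 j k q * (Yg ω q.1 * Yg ω q.2) ∂(μ.prod μ) := by
      intro ω j k
      simp only [hψgdef]
      exact hrep _ _ j k
    -- the kernels
    set KY : Fin n → ℝ × ℝ → ℝ := fun i q =>
      ∫ ω, Real.exp (∑ l, β₀ l * Z i ω l) ^ 2 * (Y i ω q.1 * Y i ω q.2) with hKYdef
    set KYg : ℝ × ℝ → ℝ := fun q =>
      ∫ ω, Real.exp (∑ l, β₀ l * Zg ω l) ^ 2 * (Yg ω q.1 * Yg ω q.2) with hKYgdef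
    have hKsqb : ∀ i, ∀ᵐ ω ∂(ℙ : Measure Ω),
        |Real.exp (∑ l, β₀ l * Z i ω l) ^ 2| ≤ Eb ^ 2 := by
      intro i
      filter_upwards [hKb i] with ω hω
      rw [abs_of_nonneg (by positivity)]
      exact pow_le_pow_left₀ (Real.exp_pos _).le hω 2
    have hKgsqb : ∀ᵐ ω ∂(ℙ : Measure Ω),
        |Real.exp (∑ l, β₀ l * Zg ω l) ^ 2| ≤ Eb ^ 2 := by
      filter_upwards [hKgb] with ω hω
      rw [abs_of_nonneg (by positivity)]
      exact pow_le_pow_left₀ (Real.exp_pos _).le hω 2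
    have habs1 : ∀ {x y : ℝ}, |x| ≤ 1 → |y| ≤ 1 → |x * y| ≤ 1 := by
      intro x y hx hy
      rw [abs_mul]
      exact mul_le_one₀ hx (abs_nonneg _) hy
    have hPmeas : ∀ i, Measurable fun q : Ω × (ℝ × ℝ) => Y i q.1 q.2.1 * Y i q.1 q.2.2 :=
      fun i => ((hYmeas i).comp (measurable_fst.prodMk measurable_snd.fst)).mul
        ((hYmeas i).comp (measurable_fst.prodMk measurable_snd.snd))
    have hPgmeas : Measurable fun q : Ω × (ℝ × ℝ) => Yg q.1 q.2.1 * Yg q.1 q.2.2 :=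
      (hYgmeas.comp (measurable_fst.prodMk measurable_snd.fst)).mul
        (hYgmeas.comp (measurable_fst.prodMk measurable_snd.snd))
    -- Fubini swap for the first moment
    have hswapW : ∀ (i : Fin n) (j k : J), (∫ ω, ψ i ω j * ψ i ω k)
        = ∫ q, w2 j k q * KY i q ∂(μ.prod μ) := by
      intro i j k
      rw [integral_congr_ae (Filter.Eventually.of_forall fun ω => hWrep i ω j k)]
      have hs := swap_aux (ν := μ.prod μ)
        (K := fun ω => Real.exp (∑ l, β₀ l * Z i ω l) ^ 2) ((hexpmeas i).pow_const 2)
        (hKsqb i) (P := fun ω q => Y i ω q.1 * Y i ω q.2) (hPmeas i)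
        (fun ω q => habs1 (hY1 i ω q.1) (hY1 i ω q.2)) (hw2meas j k) (hw2int j k)
      rw [hs]
    have hswapWg : ∀ (j k : J), m j k = ∫ q, w2 j k q * KYg q ∂(μ.prod μ) := by
      intro j k
      simp only [hmdef]
      rw [integral_congr_ae (Filter.Eventually.of_forall fun ω => hWgrep ω j k)]
      have hs := swap_aux (ν := μ.prod μ)
        (K := fun ω => Real.exp (∑ l, β₀ l * Zg ω l) ^ 2) (hexpgmeas.pow_const 2)
        hKgsqb (P := fun ω q => Yg ω q.1 * Yg ω q.2) hPgmeas
        (fun ω q => habs1 (hYg1 ω q.1) (hYg1 ω q.2)) (hw2meas j k) (hw2int j k)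
      rw [hs]
    have htransKY : ∀ (i : Fin n) (q : ℝ × ℝ), KY i q = KYg q := by
      intro i q
      simp only [hKYdef, hKYgdef]
      exact htransF i (fun zy => Real.exp (∑ l, β₀ l * zy.1 l) ^ 2 * (zy.2 q.1 * zy.2 q.2))
        (((Real.measurable_exp.comp (Finset.measurable_sum _ fun l _ =>
            (by fun_prop : Measurable fun zy : (Fin p → ℝ) × (ℝ → ℝ) => β₀ l * zy.1 l))).pow_const 2).mul
          (((measurable_pi_apply q.1).comp measurable_snd).mul
            ((measurable_pi_apply q.2).comp measurable_snd)))
    have hD1 : ∀ (i : Fin n) (j k : J), (∫ ω, ψ i ω j * ψ i ω k) = m j k := by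
      intro i j k
      rw [hswapW i j k, hswapWg j k]
      exact integral_congr_ae (Filter.Eventually.of_forall fun q => by simp only [htransKY i q])
    -- integrability of the one-sample kernels
    have hXint : ∀ (i : Fin n) (q : ℝ × ℝ), Integrable
        (fun ω => Real.exp (∑ l, β₀ l * Z i ω l) ^ 2 * (Y i ω q.1 * Y i ω q.2))
        (ℙ : Measure Ω) := by
      intro i q
      refine intOfBdd (((hexpmeas i).pow_const 2).mul
        (((hYmeas i).comp (measurable_id.prodMk measurable_const)).mul
          ((hYmeas i).comp (measurable_id.prodMk measurable_const)))).aestronglyMeasurable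
        (C := Eb ^ 2) ?_
      filter_upwards [hKsqb i] with ω hω
      rw [abs_mul]
      calc |Real.exp (∑ l, β₀ l * Z i ω l) ^ 2| * |Y i ω q.1 * Y i ω q.2|
          ≤ Eb ^ 2 * 1 := mul_le_mul hω (habs1 (hY1 i ω q.1) (hY1 i ω q.2))
            (abs_nonneg _) ((abs_nonneg _).trans hω)
        _ = Eb ^ 2 := mul_one _
    -- the cross moment factorizes by independence
    have hD2 : ∀ (i i' : Fin n), i ≠ i' → ∀ (j k : J),
        (∫ ω, (ψ i ω j * ψ i ω k) * (ψ i' ω j * ψ i' ω k)) = m j k * m j k := by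
      intro i i' hne j k
      have h0 : ∀ ω : Ω, (ψ i ω j * ψ i ω k) * (ψ i' ω j * ψ i' ω k)
          = (Real.exp (∑ l, β₀ l * Z i ω l) ^ 2 * Real.exp (∑ l, β₀ l * Z i' ω l) ^ 2) *
            ∫ r, (w2 j k r.1 * w2 j k r.2) *
              ((Y i ω r.1.1 * Y i ω r.1.2) * (Y i' ω r.2.1 * Y i' ω r.2.2))
              ∂((μ.prod μ).prod (μ.prod μ)) := by
        intro ω
        rw [hWrep i ω j k, hWrep i' ω j k]
        have hp := integral_prod_mul (μ := μ.prod μ) (ν := μ.prod μ)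
          (fun q => w2 j k q * (Y i ω q.1 * Y i ω q.2))
          (fun q => w2 j k q * (Y i' ω q.1 * Y i' ω q.2))
        have h4 : (∫ r : (ℝ × ℝ) × (ℝ × ℝ),
              (w2 j k r.1 * (Y i ω r.1.1 * Y i ω r.1.2)) *
              (w2 j k r.2 * (Y i' ω r.2.1 * Y i' ω r.2.2)) ∂((μ.prod μ).prod (μ.prod μ)))
            = ∫ r, (w2 j k r.1 * w2 j k r.2) *
              ((Y i ω r.1.1 * Y i ω r.1.2) * (Y i' ω r.2.1 * Y i' ω r.2.2))
              ∂((μ.prod μ).prod (μ.prod μ)) :=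
          integral_congr_ae (Filter.Eventually.of_forall fun r => by ring)
        rw [← h4, hp]
        ring
      rw [integral_congr_ae (Filter.Eventually.of_forall h0)]
      have hKKb : ∀ᵐ ω ∂(ℙ : Measure Ω),
          |Real.exp (∑ l, β₀ l * Z i ω l) ^ 2 * Real.exp (∑ l, β₀ l * Z i' ω l) ^ 2|
            ≤ Eb ^ 2 * Eb ^ 2 := by
        filter_upwards [hKsqb i, hKsqb i'] with ω h1 h2
        rw [abs_mul]
        exact mul_le_mul h1 h2 (abs_nonneg _) ((abs_nonneg _).trans h1)
      have hs := swap_aux (ν := (μ.prod μ).prod (μ.prod μ))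
        (K := fun ω => Real.exp (∑ l, β₀ l * Z i ω l) ^ 2 *
          Real.exp (∑ l, β₀ l * Z i' ω l) ^ 2)
        (w := fun r => w2 j k r.1 * w2 j k r.2)
        (((hexpmeas i).pow_const 2).mul ((hexpmeas i').pow_const 2)) hKKb
        (P := fun ω r => (Y i ω r.1.1 * Y i ω r.1.2) * (Y i' ω r.2.1 * Y i' ω r.2.2))
        ((((hYmeas i).comp (measurable_fst.prodMk measurable_snd.fst.fst)).mul
          ((hYmeas i).comp (measurable_fst.prodMk measurable_snd.fst.snd))).mul
         (((hYmeas i').comp (measurable_fst.prodMk measurable_snd.snd.fst)).mul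
          ((hYmeas i').comp (measurable_fst.prodMk measurable_snd.snd.snd))))
        (fun ω r => habs1 (habs1 (hY1 i ω r.1.1) (hY1 i ω r.1.2))
          (habs1 (hY1 i' ω r.2.1) (hY1 i' ω r.2.2)))
        (((hw2meas j k).comp measurable_fst).mul ((hw2meas j k).comp measurable_snd))
        ((hw2int j k).mul_prod (hw2int j k))
      rw [hs]
      have hind : ∀ r : (ℝ × ℝ) × (ℝ × ℝ),
          (∫ ω, (Real.exp (∑ l, β₀ l * Z i ω l) ^ 2 * Real.exp (∑ l, β₀ l * Z i' ω l) ^ 2) *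
            ((Y i ω r.1.1 * Y i ω r.1.2) * (Y i' ω r.2.1 * Y i' ω r.2.2)))
          = KY i r.1 * KY i' r.2 := by
        intro r
        have hF1meas : Measurable (fun zy : (Fin p → ℝ) × (ℝ → ℝ) =>
            Real.exp (∑ l, β₀ l * zy.1 l) ^ 2 * (zy.2 r.1.1 * zy.2 r.1.2)) :=
          (((Real.measurable_exp.comp (Finset.measurable_sum _ fun l _ =>
            (by fun_prop : Measurable fun zy : (Fin p → ℝ) × (ℝ → ℝ) => β₀ l * zy.1 l))).pow_const 2).mul
            (((measurable_pi_apply r.1.1).comp measurable_snd).mul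
              ((measurable_pi_apply r.1.2).comp measurable_snd)))
        have hF2meas : Measurable (fun zy : (Fin p → ℝ) × (ℝ → ℝ) =>
            Real.exp (∑ l, β₀ l * zy.1 l) ^ 2 * (zy.2 r.2.1 * zy.2 r.2.2)) :=
          (((Real.measurable_exp.comp (Finset.measurable_sum _ fun l _ =>
            (by fun_prop : Measurable fun zy : (Fin p → ℝ) × (ℝ → ℝ) => β₀ l * zy.1 l))).pow_const 2).mul
            (((measurable_pi_apply r.2.1).comp measurable_snd).mul
              ((measurable_pi_apply r.2.2).comp measurable_snd)))
        have hIF : IndepFun (fun ω => (Z i ω, Y i ω)) (fun ω => (Z i' ω, Y i' ω))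
            (ℙ : Measure Ω) := hindep.indepFun hne
        have hX := hIF.comp hF1meas.stronglyMeasurable.measurable hF2meas.stronglyMeasurable.measurable
        have hmul : (∫ ω, (Real.exp (∑ l, β₀ l * Z i ω l) ^ 2 *
              (Y i ω r.1.1 * Y i ω r.1.2)) *
              (Real.exp (∑ l, β₀ l * Z i' ω l) ^ 2 * (Y i' ω r.2.1 * Y i' ω r.2.2)))
            = (∫ ω, Real.exp (∑ l, β₀ l * Z i ω l) ^ 2 * (Y i ω r.1.1 * Y i ω r.1.2)) *
              ∫ ω, Real.exp (∑ l, β₀ l * Z i' ω l) ^ 2 * (Y i' ω r.2.1 * Y i' ω r.2.2) :=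
          hX.integral_mul_eq_mul_integral (hXint i r.1).aestronglyMeasurable (hXint i' r.2).aestronglyMeasurable
        calc (∫ ω, (Real.exp (∑ l, β₀ l * Z i ω l) ^ 2 *
              Real.exp (∑ l, β₀ l * Z i' ω l) ^ 2) *
              ((Y i ω r.1.1 * Y i ω r.1.2) * (Y i' ω r.2.1 * Y i' ω r.2.2)))
            = ∫ ω, (Real.exp (∑ l, β₀ l * Z i ω l) ^ 2 * (Y i ω r.1.1 * Y i ω r.1.2)) *
              (Real.exp (∑ l, β₀ l * Z i' ω l) ^ 2 * (Y i' ω r.2.1 * Y i' ω r.2.2)) :=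
              integral_congr_ae (Filter.Eventually.of_forall fun ω => by ring)
          _ = KY i r.1 * KY i' r.2 := by rw [hmul]
      have hintegr : (∫ r : (ℝ × ℝ) × ℝ × ℝ, ((w2 j k r.1 * w2 j k r.2) *
            ∫ ω, Real.exp (∑ l, β₀ l * Z i ω l) ^ 2 * Real.exp (∑ l, β₀ l * Z i' ω l) ^ 2 *
              (Y i ω r.1.1 * Y i ω r.1.2 * (Y i' ω r.2.1 * Y i' ω r.2.2)))
            ∂((μ.prod μ).prod (μ.prod μ)))
          = ∫ r : (ℝ × ℝ) × ℝ × ℝ, (w2 j k r.1 * w2 j k r.2) * (KY i r.1 * KY i' r.2)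
            ∂((μ.prod μ).prod (μ.prod μ)) := by
        refine integral_congr_ae (Filter.Eventually.of_forall fun r => ?_)
        simp only [hind r]
      rw [hintegr]
      have hsplit : (∫ r, (w2 j k r.1 * w2 j k r.2) * (KY i r.1 * KY i' r.2)
            ∂((μ.prod μ).prod (μ.prod μ)))
          = (∫ q, w2 j k q * KY i q ∂(μ.prod μ)) *
            ∫ q, w2 j k q * KY i' q ∂(μ.prod μ) := by
        have hp := integral_prod_mul (μ := μ.prod μ) (ν := μ.prod μ)
          (fun q => w2 j k q * KY i q) (fun q => w2 j k q * KY i' q)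
        rw [← hp]
        exact integral_congr_ae (Filter.Eventually.of_forall fun r => by ring)
      rw [hsplit, ← hswapW i j k, ← hswapW i' j k, hD1 i j k, hD1 i' j k]
    -- cross terms of the centered variables vanish
    have hcross : ∀ (i i' : Fin n), i ≠ i' → ∀ (j k : J),
        (∫ ω, (ψ i ω j * ψ i ω k - m j k) * (ψ i' ω j * ψ i' ω k - m j k)) = 0 := by
      intro i i' hne j k
      have hex : ∀ ω : Ω, (ψ i ω j * ψ i ω k - m j k) * (ψ i' ω j * ψ i' ω k - m j k)
          = (ψ i ω j * ψ i ω k) * (ψ i' ω j * ψ i' ω k)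
            - m j k * (ψ i ω j * ψ i ω k) - m j k * (ψ i' ω j * ψ i' ω k)
            + m j k * m j k := fun ω => by ring
      have i1 : Integrable (fun ω => (ψ i ω j * ψ i ω k) * (ψ i' ω j * ψ i' ω k))
          (ℙ : Measure Ω) :=
        intMulOfBdd ((hψmeas i j).mul (hψmeas i k)).aestronglyMeasurable
          ((hψmeas i' j).mul (hψmeas i' k)).aestronglyMeasurable (hWbd i j k) (hWbd i' j k)
      have i2 : Integrable (fun ω => m j k * (ψ i ω j * ψ i ω k)) (ℙ : Measure Ω) :=
        (hWint i j k).const_mul _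
      have i3 : Integrable (fun ω => m j k * (ψ i' ω j * ψ i' ω k)) (ℙ : Measure Ω) :=
        (hWint i' j k).const_mul _
      have i12 : Integrable (fun ω => (ψ i ω j * ψ i ω k) * (ψ i' ω j * ψ i' ω k)
          - m j k * (ψ i ω j * ψ i ω k)) (ℙ : Measure Ω) := i1.sub i2
      have i123 : Integrable (fun ω => (ψ i ω j * ψ i ω k) * (ψ i' ω j * ψ i' ω k)
          - m j k * (ψ i ω j * ψ i ω k) - m j k * (ψ i' ω j * ψ i' ω k))
          (ℙ : Measure Ω) := i12.sub i3
      rw [integral_congr_ae (Filter.Eventually.of_forall hex),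
        integral_add i123 (integrable_const _), integral_sub i12 i3, integral_sub i1 i2,
        integral_const_mul, integral_const_mul, integral_const,
        hD1 i j k, hD1 i' j k, hD2 i i' hne j k]
      simp only [measure_univ, ENNReal.toReal_one, probReal_univ, smul_eq_mul, one_mul]
      ring
    -- diagonal terms
    have hdiag : ∀ (i : Fin n) (j k : J),
        (∫ ω, (ψ i ω j * ψ i ω k - m j k) ^ 2) ≤ ∫ ω, (ψ i ω j * ψ i ω k) ^ 2 := by
      intro i j k
      have hex : ∀ ω : Ω, (ψ i ω j * ψ i ω k - m j k) ^ 2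
          = (ψ i ω j * ψ i ω k) ^ 2 - (2 * m j k) * (ψ i ω j * ψ i ω k) + m j k * m j k :=
        fun ω => by ring
      have i2 : Integrable (fun ω => (2 * m j k) * (ψ i ω j * ψ i ω k)) (ℙ : Measure Ω) :=
        (hWint i j k).const_mul _
      have i12 : Integrable (fun ω => (ψ i ω j * ψ i ω k) ^ 2
          - (2 * m j k) * (ψ i ω j * ψ i ω k)) (ℙ : Measure Ω) := (hW2int i j k).sub i2
      rw [integral_congr_ae (Filter.Eventually.of_forall hex),
        integral_add i12 (integrable_const _), integral_sub (hW2int i j k) i2,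
        integral_const_mul, integral_const, hD1 i j k]
      simp only [measure_univ, ENNReal.toReal_one, probReal_univ, smul_eq_mul, one_mul]
      nlinarith [sq_nonneg (m j k)]
    -- variance bound per (j,k)
    have hvar : ∀ (j k : J), (∫ ω, Dm ω j k ^ 2)
        ≤ (n:ℝ)⁻¹ ^ 2 * ∑ i, ∫ ω, (ψ i ω j * ψ i ω k) ^ 2 := by
      intro j k
      have hDD_int : ∀ i i' : Fin n, Integrable (fun ω =>
          (ψ i ω j * ψ i ω k - m j k) * (ψ i' ω j * ψ i' ω k - m j k)) (ℙ : Measure Ω) := by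
        intro i i'
        refine intMulOfBdd
          (((hψmeas i j).mul (hψmeas i k)).sub measurable_const).aestronglyMeasurable
          (((hψmeas i' j).mul (hψmeas i' k)).sub measurable_const).aestronglyMeasurable
          (C := Cψ j * Cψ k + |m j k|) (D := Cψ j * Cψ k + |m j k|) ?_ ?_
        · filter_upwards [hWbd i j k] with ω hω
          exact (abs_sub _ _).trans (add_le_add_left hω _)
        · filter_upwards [hWbd i' j k] with ω hω
          exact (abs_sub _ _).trans (add_le_add_left hω _)
      have h1 : ∀ ω : Ω, Dm ω j k ^ 2 = (n:ℝ)⁻¹ ^ 2 *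
          ∑ i, ∑ i', (ψ i ω j * ψ i ω k - m j k) * (ψ i' ω j * ψ i' ω k - m j k) := by
        intro ω
        simp only [hDmdef]
        rw [mul_pow]
        congr 1
        rw [sq, Finset.sum_mul_sum]
      rw [integral_congr_ae (Filter.Eventually.of_forall h1), integral_const_mul,
        integral_finset_sum _ fun i _ => integrable_finset_sum _ fun i' _ => hDD_int i i']
      refine mul_le_mul_of_nonneg_left ?_ (by positivity)
      refine Finset.sum_le_sum fun i _ => ?_
      have h2 : (∫ ω, ∑ i', (ψ i ω j * ψ i ω k - m j k) *
          (ψ i' ω j * ψ i' ω k - m j k)) = ∫ ω, (ψ i ω j * ψ i ω k - m j k) ^ 2 := by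
        rw [integral_finset_sum _ fun i' _ => hDD_int i i']
        rw [Finset.sum_eq_single i (fun i' _ hne => hcross i i' (Ne.symm hne) j k)
          (fun h => absurd (Finset.mem_univ i) h)]
        exact integral_congr_ae (Filter.Eventually.of_forall fun ω => (sq _).symm)
      rw [h2]
      exact hdiag i j k
    -- pointwise Bessel bound
    have hbes : ∀ (i : Fin n) (ω : Ω), (∑ j, ψ i ω j ^ 2) ^ 2
        ≤ Real.exp (4 * ∑ l, β₀ l * Z i ω l) * Q ^ 2 := by
      intro i ω
      have hv : Measurable fun t => αm t * Y i ω t := hαmmeas.mul (hYsec i ω)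
      have hvb : ∀ t, |αm t * Y i ω t| ≤ M := fun t => by
        rw [abs_mul]
        calc |αm t| * |Y i ω t| ≤ M * 1 := mul_le_mul (hM t) (hY1 i ω t) (abs_nonneg _) hM0
          _ = M := mul_one M
      have hb := bessel_aux hφmeas hφortho hv hvb
      have hv2Q : (∫ t, (αm t * Y i ω t) ^ 2 ∂μ) ≤ Q := by
        rw [hQdef]
        refine integral_mono (intSqOfBdd hv.aestronglyMeasurable
          (Filter.Eventually.of_forall hvb)) hαm2 fun t => ?_
        have h := hY01 i ω t
        have h1 : Y i ω t ^ 2 ≤ 1 := by nlinarith [h.1, h.2]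
        calc (αm t * Y i ω t) ^ 2 = αm t ^ 2 * Y i ω t ^ 2 := by ring
          _ ≤ αm t ^ 2 * 1 := mul_le_mul_of_nonneg_left h1 (sq_nonneg _)
          _ = αm t ^ 2 := mul_one _
      have hψeq : ∀ j, ψ i ω j = Real.exp (∑ l, β₀ l * Z i ω l) *
          ∫ t, φ j t * (αm t * Y i ω t) ∂μ := by
        intro j
        simp only [hψdef]
        rw [← integral_const_mul]
        exact integral_congr_ae (Filter.Eventually.of_forall fun t => by ring)
      have h1 : ∑ j, ψ i ω j ^ 2 = Real.exp (∑ l, β₀ l * Z i ω l) ^ 2 *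
          ∑ j, (∫ t, φ j t * (αm t * Y i ω t) ∂μ) ^ 2 := by
        rw [Finset.mul_sum]
        exact Finset.sum_congr rfl fun j _ => by rw [hψeq j]; ring
      have h2 : ∑ j, ψ i ω j ^ 2 ≤ Real.exp (∑ l, β₀ l * Z i ω l) ^ 2 * Q := by
        rw [h1]
        exact mul_le_mul_of_nonneg_left (hb.trans hv2Q) (sq_nonneg _)
      calc (∑ j, ψ i ω j ^ 2) ^ 2 ≤ (Real.exp (∑ l, β₀ l * Z i ω l) ^ 2 * Q) ^ 2 :=
          pow_le_pow_left₀ (Finset.sum_nonneg fun j _ => sq_nonneg _) h2 2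
        _ = Real.exp (4 * ∑ l, β₀ l * Z i ω l) * Q ^ 2 := by
          rw [mul_pow, ← pow_mul]
          congr 1
          rw [show (4:ℝ) * ∑ l, β₀ l * Z i ω l
              = ((4:ℕ):ℝ) * ∑ l, β₀ l * Z i ω l by norm_num, Real.exp_nat_mul]
    -- total fourth-moment bound per sample
    have hbesT : ∀ i : Fin n, ∑ j, ∑ k, (∫ ω, (ψ i ω j * ψ i ω k) ^ 2) ≤ E4 * Q ^ 2 := by
      intro i
      have hintsum : ∀ ω : Ω, ∑ j, ∑ k, (ψ i ω j * ψ i ω k) ^ 2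
          = (∑ j, ψ i ω j ^ 2) ^ 2 := by
        intro ω
        rw [sq (∑ j, ψ i ω j ^ 2), Finset.sum_mul_sum]
        exact Finset.sum_congr rfl fun j _ => Finset.sum_congr rfl fun k _ => mul_pow _ _ _
      have e : (∫ ω, ∑ j, ∑ k, (ψ i ω j * ψ i ω k) ^ 2)
          = ∑ j, ∑ k, ∫ ω, (ψ i ω j * ψ i ω k) ^ 2 := by
        rw [integral_finset_sum _ fun j _ => integrable_finset_sum _ fun k _ => hW2int i j k]
        exact Finset.sum_congr rfl fun j _ => integral_finset_sum _ fun k _ => hW2int i j k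
      have int1 : Integrable (fun ω => (∑ j, ψ i ω j ^ 2) ^ 2) (ℙ : Measure Ω) := by
        refine intSqOfBdd (Finset.measurable_sum _ fun j _ =>
          ((hψmeas i j).pow_const 2)).aestronglyMeasurable (C := ∑ j, Cψ j ^ 2) ?_
        filter_upwards [hψbd i] with ω hω
        rw [abs_of_nonneg (Finset.sum_nonneg fun j _ => sq_nonneg _)]
        refine Finset.sum_le_sum fun j _ => ?_
        calc ψ i ω j ^ 2 = |ψ i ω j| ^ 2 := (sq_abs _).symm
          _ ≤ Cψ j ^ 2 := pow_le_pow_left₀ (abs_nonneg _) (hω j) 2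
      have int2 : Integrable (fun ω => Real.exp (4 * ∑ l, β₀ l * Z i ω l) * Q ^ 2)
          (ℙ : Measure Ω) := by
        refine Integrable.mul_const ?_ _
        refine intOfBdd (Real.measurable_exp.comp
          ((hsummeas i).const_mul 4)).aestronglyMeasurable
          (C := Real.exp (4 * (B * ∑ l, |β₀ l|))) ?_
        filter_upwards [hZbd i] with ω hω
        rw [abs_of_nonneg (Real.exp_pos _).le]
        refine Real.exp_le_exp.2 ?_
        have h := (le_abs_self _).trans (sumAbsLe β₀ (Z i ω) B hω)
        linarith
      calc ∑ j, ∑ k, (∫ ω, (ψ i ω j * ψ i ω k) ^ 2)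
          = ∫ ω, ∑ j, ∑ k, (ψ i ω j * ψ i ω k) ^ 2 := e.symm
        _ = ∫ ω, (∑ j, ψ i ω j ^ 2) ^ 2 :=
            integral_congr_ae (Filter.Eventually.of_forall hintsum)
        _ ≤ ∫ ω, Real.exp (4 * ∑ l, β₀ l * Z i ω l) * Q ^ 2 :=
            integral_mono int1 int2 fun ω => hbes i ω
        _ = (∫ ω, Real.exp (4 * ∑ l, β₀ l * Z i ω l)) * Q ^ 2 := integral_mul_const _ _
        _ = E4 * Q ^ 2 := by
            rw [hE4def]
            congr 1
            exact htransF i (fun zy => Real.exp (4 * ∑ l, β₀ l * zy.1 l))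
              (Real.measurable_exp.comp ((Finset.measurable_sum _ fun l _ =>
                (by fun_prop : Measurable fun zy : (Fin p → ℝ) × (ℝ → ℝ) => β₀ l * zy.1 l)).const_mul 4))
    -- assembling
    calc ∑ j, ∑ k, ∫ ω, Dm ω j k ^ 2
        ≤ ∑ j, ∑ k, ((n:ℝ)⁻¹ ^ 2 * ∑ i, ∫ ω, (ψ i ω j * ψ i ω k) ^ 2) :=
          Finset.sum_le_sum fun j _ => Finset.sum_le_sum fun k _ => hvar j k
      _ = (n:ℝ)⁻¹ ^ 2 * ∑ j, ∑ k, ∑ i, ∫ ω, (ψ i ω j * ψ i ω k) ^ 2 := by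
          rw [Finset.mul_sum]
          exact Finset.sum_congr rfl fun j _ => (Finset.mul_sum _ _ _).symm
      _ = (n:ℝ)⁻¹ ^ 2 * ∑ i, ∑ j, ∑ k, ∫ ω, (ψ i ω j * ψ i ω k) ^ 2 := by
          congr 1
          exact (Finset.sum_congr rfl fun j _ => Finset.sum_comm).trans Finset.sum_comm
      _ ≤ (n:ℝ)⁻¹ ^ 2 * ∑ _i : Fin n, E4 * Q ^ 2 :=
          mul_le_mul_of_nonneg_left (Finset.sum_le_sum fun i _ => hbesT i) (by positivity)
      _ = (n:ℝ)⁻¹ ^ 2 * ((n:ℝ) * (E4 * Q ^ 2)) := by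
          rw [Finset.sum_const, Finset.card_univ, Fintype.card_fin, nsmul_eq_mul]
      _ = (n:ℝ)⁻¹ * E4 * Q ^ 2 := by
          field_simp
  -- conclusion
  have hRHS0 : (0:ℝ) ≤ (n : ℝ)⁻¹ * E4 * Q ^ 2 / c ^ 2 := by positivity
  by_cases hFI : Integrable (fun ω : Ω => sSup {x : ℝ | ∃ a : J → ℝ,
      (∫ t, ((∑ j, a j * φ j t) ^ 2 *
          ∫ ω', Real.exp (∑ l, β₀ l * Zg ω' l) * Yg ω' t) ∂μ) ≤ 1 ∧
      x = ((n : ℝ)⁻¹ * ∑ i,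
        ((∫ t, (∑ j, a j * φ j t) * αm t *
            Real.exp (∑ l, β₀ l * Z i ω l) * Y i ω t ∂μ) ^ 2
          - ∫ ω', (∫ t, (∑ j, a j * φ j t) * αm t *
              Real.exp (∑ l, β₀ l * Zg ω' l) * Yg ω' t ∂μ) ^ 2)) ^ 2}) (ℙ : Measure Ω)
  · calc (∫ ω, sSup {x : ℝ | ∃ a : J → ℝ,
        (∫ t, ((∑ j, a j * φ j t) ^ 2 *
            ∫ ω', Real.exp (∑ l, β₀ l * Zg ω' l) * Yg ω' t) ∂μ) ≤ 1 ∧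
        x = ((n : ℝ)⁻¹ * ∑ i,
          ((∫ t, (∑ j, a j * φ j t) * αm t *
              Real.exp (∑ l, β₀ l * Z i ω l) * Y i ω t ∂μ) ^ 2
            - ∫ ω', (∫ t, (∑ j, a j * φ j t) * αm t *
                Real.exp (∑ l, β₀ l * Zg ω' l) * Yg ω' t ∂μ) ^ 2)) ^ 2})
        ≤ ∫ ω, c⁻¹ ^ 2 * ∑ j, ∑ k, Dm ω j k ^ 2 := integral_mono hFI hGint hsupb
      _ = c⁻¹ ^ 2 * ∑ j, ∑ k, ∫ ω, Dm ω j k ^ 2 := by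
          rw [integral_const_mul]
          congr 1
          rw [integral_finset_sum _ fun j _ => integrable_finset_sum _ fun k _ =>
            hDm2int j k]
          exact Finset.sum_congr rfl fun j _ =>
            integral_finset_sum _ fun k _ => hDm2int j k
      _ ≤ c⁻¹ ^ 2 * ((n:ℝ)⁻¹ * E4 * Q ^ 2) := by
          refine mul_le_mul_of_nonneg_left hmain (by positivity)
      _ = (n : ℝ)⁻¹ * E4 * Q ^ 2 / c ^ 2 := by
          rw [div_eq_mul_inv, ← inv_pow]
          ring
  · rw [integral_undef hFI]
    exact hRHS0
end

section
/- Deterministic core of Lemma 3 of the paper (event inclusion Δ₁ ∩ {|β̂ − β₀|₁ ≤ ε} ⊆ Δ₂). Let β̂ : Ω → ℝ^p be measurable with |β̂(ω) − β₀|₁ ≤ 2R for all ω, where R > 0 and |β₀|₁ ≤ R, and let ε > 0 satisfy ε · B e^{2B|β₀|₁} e^{2BR} / f₀ ≤ 1/4. Define the events Δ₁ = { ∀ α ∈ S with α ≠ 0 : | ‖α‖²_rand − ‖α‖²_det | ≤ (1/2) ‖α‖²_det } and Δ₂ = { ∀ α ∈ S : | ‖α‖²_{rand(β̂)} − ‖α‖²_rand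 | ≤ (1/2) ‖α‖²_rand }. Then Δ₁ ∩ { |β̂ − β₀|₁ ≤ ε } ⊆ Δ₂. -/
open MeasureTheory ProbabilityTheory Real

lemma my_abs_exp_sub_one_le (x : ℝ) : |Real.exp x - 1| ≤ |x| * Real.exp |x| := by
  rcases le_or_gt 0 x with hx | hx
  · rw [abs_of_nonneg hx,
      abs_of_nonneg (by linarith [Real.one_le_exp hx] : (0:ℝ) ≤ Real.exp x - 1)]
    have h := Real.add_one_le_exp (-x)
    have hpos := (Real.exp_pos x).le
    have h2 : Real.exp x * (-x + 1) ≤ Real.exp x * Real.exp (-x) :=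
      mul_le_mul_of_nonneg_left h hpos
    rw [← Real.exp_add, add_neg_cancel, Real.exp_zero] at h2
    nlinarith
  · rw [abs_of_neg hx,
      abs_of_nonpos (by linarith [Real.exp_lt_one_iff.mpr hx] : Real.exp x - 1 ≤ 0)]
    have h := Real.add_one_le_exp x
    have h2 : (1:ℝ) ≤ Real.exp (-x) := Real.one_le_exp (by linarith)
    nlinarith

lemma my_key (n : ℕ) (hn : 1 ≤ n) (ch c I : Fin n → ℝ) (K E1 f₀ Sg dt : ℝ)
    (hI0 : ∀ i, 0 ≤ I i) (hc0 : ∀ i, 0 < c i) (hISg : ∀ i, I i ≤ Sg)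
    (hcE : ∀ i, c i ≤ E1) (hA : ∀ i, |ch i - c i| ≤ K * c i) (hK0 : 0 ≤ K)
    (hE1 : 0 < E1) (hf0 : 0 < f₀)
    (hlow : f₀ * E1⁻¹ * Sg ≤ dt)
    (hΔ1 : |(n:ℝ)⁻¹ * ∑ i, c i * I i - dt| ≤ (1/2) * dt)
    (hsmall : K * (E1 * E1) ≤ f₀ / 4) :
    |(n:ℝ)⁻¹ * ∑ i, ch i * I i - (n:ℝ)⁻¹ * ∑ i, c i * I i|
      ≤ (1/2) * ((n:ℝ)⁻¹ * ∑ i, c i * I i) := by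
  have hn0 : (0:ℝ) < n := by exact_mod_cast hn
  have hninv : (0:ℝ) ≤ (n:ℝ)⁻¹ := by positivity
  set r : ℝ := (n:ℝ)⁻¹ * ∑ i, c i * I i with hr
  have hr0 : 0 ≤ r :=
    mul_nonneg hninv (Finset.sum_nonneg fun i _ => mul_nonneg (hc0 i).le (hI0 i))
  -- F1 : |rh - r| ≤ K * r
  have hF1 : |(n:ℝ)⁻¹ * ∑ i, ch i * I i - r| ≤ K * r := by
    rw [hr, ← mul_sub, ← Finset.sum_sub_distrib, abs_mul, abs_of_nonneg hninv]
    have hsum : |∑ i, (ch i * I i - c i * I i)| ≤ ∑ i, K * (c i * I i) := by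
      calc |∑ i, (ch i * I i - c i * I i)| ≤ ∑ i, |ch i * I i - c i * I i| :=
            Finset.abs_sum_le_sum_abs _ _
        _ ≤ ∑ i, K * (c i * I i) := by
            apply Finset.sum_le_sum; intro i _
            rw [show ch i * I i - c i * I i = (ch i - c i) * I i from by ring,
              abs_mul, abs_of_nonneg (hI0 i)]
            calc |ch i - c i| * I i ≤ (K * c i) * I i :=
                  mul_le_mul_of_nonneg_right (hA i) (hI0 i)
              _ = K * (c i * I i) := by ring
    calc (n:ℝ)⁻¹ * |∑ i, (ch i * I i - c i * I i)|
        ≤ (n:ℝ)⁻¹ * ∑ i, K * (c i * I i) := mul_le_mul_of_nonneg_left hsum hninv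
      _ = K * ((n:ℝ)⁻¹ * ∑ i, c i * I i) := by rw [← Finset.mul_sum]; ring
  -- F2 : r ≤ E1 * Sg
  have hF2 : r ≤ E1 * Sg := by
    rw [hr]
    have hterm : ∀ i ∈ Finset.univ, c i * I i ≤ E1 * Sg := fun i _ =>
      mul_le_mul (hcE i) (hISg i) (hI0 i) hE1.le
    calc (n:ℝ)⁻¹ * ∑ i, c i * I i ≤ (n:ℝ)⁻¹ * ∑ _i : Fin n, E1 * Sg :=
        mul_le_mul_of_nonneg_left (Finset.sum_le_sum hterm) hninv
      _ = (n:ℝ)⁻¹ * ((n:ℝ) * (E1 * Sg)) := by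
          simp [Finset.sum_const, Finset.card_univ, nsmul_eq_mul]
      _ = E1 * Sg := by field_simp
  -- consequences of Δ1
  obtain ⟨hl, hrgt⟩ := abs_le.mp hΔ1
  have hdt0 : 0 ≤ dt := by
    have h := abs_nonneg (r - dt)
    have h3 := le_trans h hΔ1
    linarith
  have hdt2r : dt ≤ 2 * r := by linarith
  -- f₀ * Sg ≤ E1 * dt
  have hlow' : f₀ * Sg ≤ E1 * dt := by
    have h := mul_le_mul_of_nonneg_left hlow hE1.le
    rw [show E1 * (f₀ * E1⁻¹ * Sg) = f₀ * Sg * (E1 * E1⁻¹) from by ring,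
      mul_inv_cancel₀ hE1.ne', mul_one] at h
    exact h
  -- chain
  set A : ℝ := |(n:ℝ)⁻¹ * ∑ i, ch i * I i - r| with hA'
  have t1 : K * r ≤ K * (E1 * Sg) := mul_le_mul_of_nonneg_left hF2 hK0
  have t2 : (K * E1) * (f₀ * Sg) ≤ (K * E1) * (E1 * dt) :=
    mul_le_mul_of_nonneg_left hlow' (mul_nonneg hK0 hE1.le)
  have t3 : (K * E1 * E1) * dt ≤ (K * E1 * E1) * (2 * r) :=
    mul_le_mul_of_nonneg_left hdt2r (by positivity)
  have t4 : (K * (E1 * E1)) * r ≤ (f₀ / 4) * r :=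
    mul_le_mul_of_nonneg_right hsmall hr0
  show A ≤ (1/2) * r
  nlinarith [mul_le_mul_of_nonneg_left hF1 hf0.le,
    mul_le_mul_of_nonneg_left t1 hf0.le, t2, t3, t4, hf0, hr0]

/-- deterministic core of Lemma 3 of the paper: the event
inclusion `Δ₁ ∩ {|β̂ − β₀|₁ ≤ ε} ⊆ Δ₂`.  Here
`Δ₁ = {∀ α ∈ S, α ≠ 0 : |‖α‖²_rand − ‖α‖²_det| ≤ ½‖α‖²_det}` and
`Δ₂ = {∀ α ∈ S : |‖α‖²_{rand(β̂)} − ‖α‖²_rand| ≤ ½‖α‖²_rand}`, and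
`ε B e^{2B|β₀|₁} e^{2BR} / f₀ ≤ 1/4`. -/
theorem stmt_4
    {Ω : Type*} [MeasureSpace Ω] [IsProbabilityMeasure (ℙ : Measure Ω)]
    (τ B f₀ R ε : ℝ) (hτ : 0 < τ) (hB : 0 < B) (hf₀ : 0 < f₀)
    (hR : 0 < R) (hε : 0 < ε)
    (p n : ℕ) (hn : 1 ≤ n) (β₀ : Fin p → ℝ) (hβ₀ : (∑ j, |β₀ j|) ≤ R)
    (Z : Fin n → Ω → Fin p → ℝ) (Y : Fin n → Ω → ℝ → ℝ)
    (Zg : Ω → Fin p → ℝ) (Yg : Ω → ℝ → ℝ)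
    (hZmeas : ∀ i, Measurable (Z i))
    (hZgmeas : Measurable Zg)
    (hYmeas : ∀ i, Measurable (fun q : Ω × ℝ => Y i q.1 q.2))
    (hYgmeas : Measurable (fun q : Ω × ℝ => Yg q.1 q.2))
    (hZbd : ∀ i ω j, |Z i ω j| ≤ B)
    (hY01 : ∀ i ω t, Y i ω t ∈ Set.Icc (0 : ℝ) 1)
    (hYg01 : ∀ ω t, Yg ω t ∈ Set.Icc (0 : ℝ) 1)
    (hident : ∀ i,
      Measure.map (fun ω => (Z i ω, Y i ω)) ℙ
        = Measure.map (fun ω => (Zg ω, Yg ω)) ℙ)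
    (hindep : iIndepFun
      (fun i ω => (Z i ω, Y i ω)) ℙ)
    (J : Type*) [Fintype J] [DecidableEq J] (φ : J → ℝ → ℝ)
    (hφmeas : ∀ j, Measurable (φ j))
    (hφortho : ∀ j l, (∫ t in Set.Icc 0 τ, φ j t * φ l t)
      = if j = l then 1 else 0)
    -- baseline lower-bound assumption on S
    (hlow : ∀ a : J → ℝ,
      f₀ * Real.exp (-(B * ∑ j, |β₀ j|)) *
          (∫ t in Set.Icc 0 τ, (∑ j, a j * φ j t) ^ 2)
        ≤ ∫ t in Set.Icc 0 τ, (∑ j, a j * φ j t) ^ 2 *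
            ∫ ω, Real.exp (∑ l, β₀ l * Zg ω l) * Yg ω t)
    -- the estimator β̂
    (βhat : Ω → Fin p → ℝ) (hβhatmeas : Measurable βhat)
    (hβhatball : ∀ ω, (∑ j, |βhat ω j - β₀ j|) ≤ 2 * R)
    -- the smallness condition on ε
    (hεsmall : ε * B * Real.exp (2 * B * ∑ j, |β₀ j|) *
        Real.exp (2 * B * R) / f₀ ≤ 1 / 4) :
    {ω : Ω | ∀ a : J → ℝ, a ≠ 0 →
        |((n : ℝ)⁻¹ * ∑ i, ∫ t in Set.Icc 0 τ,
            (∑ j, a j * φ j t) ^ 2 *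
              Real.exp (∑ l, β₀ l * Z i ω l) * Y i ω t)
          - (∫ t in Set.Icc 0 τ, (∑ j, a j * φ j t) ^ 2 *
              ∫ ω', Real.exp (∑ l, β₀ l * Zg ω' l) * Yg ω' t)|
          ≤ (1 / 2) * ∫ t in Set.Icc 0 τ, (∑ j, a j * φ j t) ^ 2 *
              ∫ ω', Real.exp (∑ l, β₀ l * Zg ω' l) * Yg ω' t}
      ∩ {ω : Ω | (∑ j, |βhat ω j - β₀ j|) ≤ ε}
      ⊆ {ω : Ω | ∀ a : J → ℝ,
          |((n : ℝ)⁻¹ * ∑ i, ∫ t in Set.Icc 0 τ,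
              (∑ j, a j * φ j t) ^ 2 *
                Real.exp (∑ l, βhat ω l * Z i ω l) * Y i ω t)
            - ((n : ℝ)⁻¹ * ∑ i, ∫ t in Set.Icc 0 τ,
                (∑ j, a j * φ j t) ^ 2 *
                  Real.exp (∑ l, β₀ l * Z i ω l) * Y i ω t)|
            ≤ (1 / 2) * ((n : ℝ)⁻¹ * ∑ i, ∫ t in Set.Icc 0 τ,
                (∑ j, a j * φ j t) ^ 2 *
                  Real.exp (∑ l, β₀ l * Z i ω l) * Y i ω t)} := by

  rintro ω ⟨h1, h2⟩
  simp only [Set.mem_setOf_eq] at h1 h2 ⊢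
  intro a
  by_cases ha : a = 0
  · subst ha; simp
  -- measurability facts
  have hgmeas : Measurable (fun t => (∑ j, a j * φ j t) ^ 2) :=
    (Finset.measurable_sum _ (fun j _ => (hφmeas j).const_mul _)).pow_const 2
  have hg0 : ∀ t : ℝ, (0:ℝ) ≤ (∑ j, a j * φ j t) ^ 2 := fun t => sq_nonneg _
  have hYsec : ∀ (i : Fin n) (ω0 : Ω), Measurable (fun t => Y i ω0 t) :=
    fun i ω0 => (hYmeas i).comp measurable_prodMk_left
  -- integrability of the squared function
  have hφsq : ∀ j, Integrable (fun t => φ j t * φ j t)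
      (volume.restrict (Set.Icc 0 τ)) := by
    intro j
    by_contra h
    have h0 := MeasureTheory.integral_undef h
    rw [hφortho j j] at h0
    simp at h0
  have hφprod : ∀ j l, Integrable (fun t => φ j t * φ l t)
      (volume.restrict (Set.Icc 0 τ)) := by
    intro j l
    apply Integrable.mono' ((hφsq j).add (hφsq l))
      ((hφmeas j).mul (hφmeas l)).aestronglyMeasurable
    filter_upwards with t
    simp only [Pi.add_apply, Pi.mul_apply, Real.norm_eq_abs, abs_mul]
    nlinarith [sq_nonneg (|φ j t| - |φ l t|), sq_abs (φ j t), sq_abs (φ l t),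
      abs_nonneg (φ j t), abs_nonneg (φ l t)]
  have hg_int : Integrable (fun t => (∑ j, a j * φ j t) ^ 2)
      (volume.restrict (Set.Icc 0 τ)) := by
    have hge : (fun t => (∑ j, a j * φ j t) ^ 2)
        = fun t => ∑ j, ∑ l, (a j * a l) * (φ j t * φ l t) := by
      funext t
      rw [sq, Finset.sum_mul_sum]
      exact Finset.sum_congr rfl fun j _ => Finset.sum_congr rfl fun l _ => by ring
    rw [hge]
    exact integrable_finset_sum _ fun j _ => integrable_finset_sum _ fun l _ =>
      (hφprod j l).const_mul _
  have hgY_int : ∀ i : Fin n, Integrable (fun t => (∑ j, a j * φ j t) ^ 2 * Y i ω t)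
      (volume.restrict (Set.Icc 0 τ)) := by
    intro i
    apply Integrable.mono' hg_int (hgmeas.mul (hYsec i ω)).aestronglyMeasurable
    filter_upwards with t
    have h01 := hY01 i ω t
    rw [Real.norm_eq_abs, Pi.mul_apply, abs_mul, abs_of_nonneg (hg0 t), abs_of_nonneg h01.1]
    nlinarith [hg0 t, h01.2]
  -- the key rewriting: pull the exponential out of the time integral
  have hrw : ∀ (β : Fin p → ℝ) (i : Fin n),
      (∫ t in Set.Icc 0 τ, (∑ j, a j * φ j t) ^ 2 *
          Real.exp (∑ l, β l * Z i ω l) * Y i ω t)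
        = Real.exp (∑ l, β l * Z i ω l) *
            ∫ t in Set.Icc 0 τ, (∑ j, a j * φ j t) ^ 2 * Y i ω t := by
    intro β i
    rw [show (fun t => (∑ j, a j * φ j t) ^ 2 *
          Real.exp (∑ l, β l * Z i ω l) * Y i ω t)
        = fun t => Real.exp (∑ l, β l * Z i ω l) *
            ((∑ j, a j * φ j t) ^ 2 * Y i ω t) from funext fun t => by ring,
      MeasureTheory.integral_const_mul]
  have hrand : ∀ (β : Fin p → ℝ),
      ((n : ℝ)⁻¹ * ∑ i, ∫ t in Set.Icc 0 τ, (∑ j, a j * φ j t) ^ 2 *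
          Real.exp (∑ l, β l * Z i ω l) * Y i ω t)
        = (n : ℝ)⁻¹ * ∑ i, Real.exp (∑ l, β l * Z i ω l) *
            ∫ t in Set.Icc 0 τ, (∑ j, a j * φ j t) ^ 2 * Y i ω t := by
    intro β
    exact congrArg _ (Finset.sum_congr rfl fun i _ => hrw β i)
  rw [hrand (βhat ω), hrand β₀]
  have h1' := h1 a ha
  rw [hrand β₀] at h1'
  -- bounds on the dot products
  have habsdot : ∀ (d : Fin p → ℝ) (i : Fin n),
      |∑ l, d l * Z i ω l| ≤ B * ∑ l, |d l| := by
    intro d i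
    calc |∑ l, d l * Z i ω l| ≤ ∑ l, |d l * Z i ω l| :=
        Finset.abs_sum_le_sum_abs _ _
      _ ≤ ∑ l, |d l| * B := by
          apply Finset.sum_le_sum; intro l _
          rw [abs_mul]
          exact mul_le_mul_of_nonneg_left (hZbd i ω l) (abs_nonneg _)
      _ = B * ∑ l, |d l| := by rw [← Finset.sum_mul]; ring
  -- the exponential perturbation bound
  have hA : ∀ i : Fin n,
      |Real.exp (∑ l, βhat ω l * Z i ω l) - Real.exp (∑ l, β₀ l * Z i ω l)|
        ≤ (ε * B * Real.exp (2 * B * R)) * Real.exp (∑ l, β₀ l * Z i ω l) := by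
    intro i
    have hsum : (∑ l, βhat ω l * Z i ω l)
        = (∑ l, β₀ l * Z i ω l) + ∑ l, (βhat ω l - β₀ l) * Z i ω l := by
      rw [← Finset.sum_add_distrib]
      exact Finset.sum_congr rfl fun l _ => by ring
    set x : ℝ := ∑ l, (βhat ω l - β₀ l) * Z i ω l with hxdef
    have hc0 := Real.exp_pos (∑ l, β₀ l * Z i ω l)
    rw [hsum, Real.exp_add,
      show Real.exp (∑ l, β₀ l * Z i ω l) * Real.exp x
          - Real.exp (∑ l, β₀ l * Z i ω l)
        = Real.exp (∑ l, β₀ l * Z i ω l) * (Real.exp x - 1) from by ring,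
      abs_mul, abs_of_pos hc0, mul_comm (ε * B * Real.exp (2 * B * R))]
    apply mul_le_mul_of_nonneg_left _ hc0.le
    have hxε : |x| ≤ B * ε := by
      calc |x| ≤ B * ∑ l, |βhat ω l - β₀ l| := habsdot _ i
        _ ≤ B * ε := mul_le_mul_of_nonneg_left h2 hB.le
    have hxR : |x| ≤ 2 * B * R := by
      calc |x| ≤ B * ∑ l, |βhat ω l - β₀ l| := habsdot _ i
        _ ≤ B * (2 * R) := mul_le_mul_of_nonneg_left (hβhatball ω) hB.le
        _ = 2 * B * R := by ring
    calc |Real.exp x - 1| ≤ |x| * Real.exp |x| := my_abs_exp_sub_one_le x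
      _ ≤ (B * ε) * Real.exp (2 * B * R) :=
          mul_le_mul hxε (Real.exp_le_exp.mpr hxR) (Real.exp_pos _).le
            (by positivity)
      _ = ε * B * Real.exp (2 * B * R) := by ring
  -- apply the arithmetic key lemma
  refine my_key n hn
    (fun i => Real.exp (∑ l, βhat ω l * Z i ω l))
    (fun i => Real.exp (∑ l, β₀ l * Z i ω l))
    (fun i => ∫ t in Set.Icc 0 τ, (∑ j, a j * φ j t) ^ 2 * Y i ω t)
    (ε * B * Real.exp (2 * B * R)) (Real.exp (B * ∑ j, |β₀ j|)) f₀
    (∫ t in Set.Icc 0 τ, (∑ j, a j * φ j t) ^ 2)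
    (∫ t in Set.Icc 0 τ, (∑ j, a j * φ j t) ^ 2 *
        ∫ ω', Real.exp (∑ l, β₀ l * Zg ω' l) * Yg ω' t)
    (fun i => integral_nonneg fun t => mul_nonneg (hg0 t) (hY01 i ω t).1)
    (fun i => Real.exp_pos _)
    (fun i => ?_) (fun i => ?_) hA (by positivity) (Real.exp_pos _) hf₀ ?_ h1' ?_
  · -- I i ≤ Sg
    apply integral_mono (hgY_int i) hg_int
    intro t
    simp only
    obtain ⟨hy0, hy1⟩ := hY01 i ω t
    nlinarith [mul_nonneg (hg0 t) (by linarith : (0:ℝ) ≤ 1 - Y i ω t)]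
  · -- c i ≤ E1
    apply Real.exp_le_exp.mpr
    calc (∑ l, β₀ l * Z i ω l) ≤ |∑ l, β₀ l * Z i ω l| := le_abs_self _
      _ ≤ B * ∑ l, |β₀ l| := habsdot β₀ i
  · -- hlow in the right form
    rw [← Real.exp_neg]
    exact hlow a
  · -- smallness
    have h := (div_le_iff₀ hf₀).mp hεsmall
    rw [show (2:ℝ) * B * ∑ j, |β₀ j| = (B * ∑ j, |β₀ j|) + (B * ∑ j, |β₀ j|)
          from by ring, Real.exp_add] at h
    nlinarith [h]
end

section
/- Lemma 1 of the paper (lower bound on the spectrum of the random Gram matrix on Δ₁ ∩ Δ₂ ∩ Ω₀). Let β̂ : Ω → ℝ^p be measurable with |β̂|₁ ≤ R almost surely, where R > 0 and |β₀|₁ ≤ R; let f̂₀ be a real random variable and Ω₀ = { |f̂₀/f₀ − 1| ≤ 1/2 }. Define the events Δ₁ = { ∀ α ∈ S with α ≠ 0 : | ‖α‖²_rand − ‖α‖²_det | ≤ (1/2) ‖α‖²_det } and Δ₂ = { ∀ α ∈ S : | ‖α‖²_{rand(β̂)} − ‖α‖²_rand | ≤ (1/2) ‖α‖²_rand }. Let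 G^{β̂} be the random symmetric |J|×|J| matrix with entries G^{β̂}_{jk} = (1/n) Σ_{i=1}^n ∫₀^τ φⱼ(t) φₖ(t) e^{β̂·Z_i} Y_i(t) dt. If n ≥ 16/(f₀ e^{−3BR})², then on the event Δ₁ ∩ Δ₂ ∩ Ω₀ every eigenvalue of G^{β̂} (equivalently, inf_{|a|₂=1} aᵀ G^{β̂} a) is at least max( f̂₀ e^{−B|β₀|₁} e^{−B|β₀−β̂|₁} / 6 , 1/√n ); in particular G^{β̂} is invertible there. -/
open MeasureTheory ProbabilityTheory Real

lemma stmt6_aux_expand {J : Type*} [Fintype J] {μ : Measure ℝ} (φ : J → ℝ → ℝ)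
    (hφint : ∀ j l, Integrable (fun t => φ j t * φ l t) μ)
    (a : J → ℝ) (h : ℝ → ℝ) (hh : AEStronglyMeasurable h μ) (C : ℝ)
    (hC : ∀ t, |h t| ≤ C) :
    ∫ t, (∑ j, a j * φ j t) ^ 2 * h t ∂μ
      = ∑ j, ∑ l, (a j * a l) * ∫ t, φ j t * φ l t * h t ∂μ := by
  have hint : ∀ j l : J, Integrable (fun t => (a j * a l) * (φ j t * φ l t * h t)) μ := by
    intro j l
    have hb : Integrable (fun t => h t * (φ j t * φ l t)) μ :=
      (hφint j l).bdd_mul hh (c := C) (Filter.Eventually.of_forall fun t => by simpa [Real.norm_eq_abs] using hC t)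
    exact (hb.const_mul (a j * a l)).congr
      (Filter.Eventually.of_forall fun t => by ring)
  have hpt : ∀ t, (∑ j, a j * φ j t) ^ 2 * h t
      = ∑ j, ∑ l, (a j * a l) * (φ j t * φ l t * h t) := by
    intro t
    rw [sq, Finset.sum_mul_sum, Finset.sum_mul]
    exact Finset.sum_congr rfl fun j _ => by
      rw [Finset.sum_mul]
      exact Finset.sum_congr rfl fun l _ => by ring
  calc ∫ t, (∑ j, a j * φ j t) ^ 2 * h t ∂μ
      = ∫ t, ∑ j, ∑ l, (a j * a l) * (φ j t * φ l t * h t) ∂μ := by simp_rw [hpt]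
    _ = ∑ j, ∫ t, ∑ l, (a j * a l) * (φ j t * φ l t * h t) ∂μ :=
        integral_finset_sum _ (fun j _ => integrable_finset_sum _ (fun l _ => hint j l))
    _ = ∑ j, ∑ l, ∫ t, (a j * a l) * (φ j t * φ l t * h t) ∂μ :=
        Finset.sum_congr rfl fun j _ =>
          integral_finset_sum _ (fun l _ => hint j l)
    _ = ∑ j, ∑ l, (a j * a l) * ∫ t, φ j t * φ l t * h t ∂μ := by
        simp_rw [MeasureTheory.integral_const_mul]

/-- Lemma 1 of the paper.  On the event `Δ₁ ∩ Δ₂ ∩ Ω₀`, if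
`n ≥ 16/(f₀ e^{−3BR})²`, every eigenvalue of the random Gram matrix `G^{β̂}`
(equivalently, the infimum of its quadratic form over the unit sphere) is at
least `max(f̂₀ e^{−B|β₀|₁} e^{−B|β₀−β̂|₁}/6, 1/√n)`; in particular `G^{β̂}`
is invertible there. -/
theorem stmt_6
    {Ω : Type*} [MeasureSpace Ω] [IsProbabilityMeasure (ℙ : Measure Ω)]
    (τ B f₀ R : ℝ) (hτ : 0 < τ) (hB : 0 < B) (hf₀ : 0 < f₀) (hR : 0 < R)
    (p n : ℕ) (hn : 1 ≤ n) (β₀ : Fin p → ℝ) (hβ₀ : (∑ j, |β₀ j|) ≤ R)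
    (Z : Fin n → Ω → Fin p → ℝ) (Y : Fin n → Ω → ℝ → ℝ)
    (Zg : Ω → Fin p → ℝ) (Yg : Ω → ℝ → ℝ)
    (hZmeas : ∀ i, Measurable (Z i))
    (hZgmeas : Measurable Zg)
    (hYmeas : ∀ i, Measurable (fun q : Ω × ℝ => Y i q.1 q.2))
    (hYgmeas : Measurable (fun q : Ω × ℝ => Yg q.1 q.2))
    (hZbd : ∀ i, ∀ᵐ ω ∂ℙ, ∀ j, |Z i ω j| ≤ B)
    (hY01 : ∀ i ω t, Y i ω t ∈ Set.Icc (0 : ℝ) 1)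
    (hYg01 : ∀ ω t, Yg ω t ∈ Set.Icc (0 : ℝ) 1)
    (hident : ∀ i,
      Measure.map (fun ω => (Z i ω, Y i ω)) ℙ
        = Measure.map (fun ω => (Zg ω, Yg ω)) ℙ)
    (hindep : iIndepFun
      (fun i ω => (Z i ω, Y i ω)) ℙ)
    (J : Type*) [Fintype J] [DecidableEq J] (φ : J → ℝ → ℝ)
    (hφmeas : ∀ j, Measurable (φ j))
    (hφortho : ∀ j l, (∫ t in Set.Icc 0 τ, φ j t * φ l t)
      = if j = l then 1 else 0)
    -- baseline lower-bound assumption on S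
    (hlow : ∀ a : J → ℝ,
      f₀ * Real.exp (-(B * ∑ j, |β₀ j|)) *
          (∫ t in Set.Icc 0 τ, (∑ j, a j * φ j t) ^ 2)
        ≤ ∫ t in Set.Icc 0 τ, (∑ j, a j * φ j t) ^ 2 *
            ∫ ω, Real.exp (∑ l, β₀ l * Zg ω l) * Yg ω t)
    -- the estimator β̂ and the preliminary estimator f̂₀
    (βhat : Ω → Fin p → ℝ) (hβhatmeas : Measurable βhat)
    (hβhatball : ∀ᵐ ω ∂ℙ, (∑ j, |βhat ω j|) ≤ R)
    (f₀hat : Ω → ℝ) (hf₀hatmeas : Measurable f₀hat)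
    -- the sample-size condition n ≥ 16/(f₀ e^{−3BR})²
    (hnlarge : 16 / (f₀ * Real.exp (-(3 * B * R))) ^ 2 ≤ (n : ℝ)) :
    ∀ ω : Ω,
      -- ω ∈ Δ₁
      (∀ a : J → ℝ, a ≠ 0 →
        |((n : ℝ)⁻¹ * ∑ i, ∫ t in Set.Icc 0 τ,
            (∑ j, a j * φ j t) ^ 2 *
              Real.exp (∑ l, β₀ l * Z i ω l) * Y i ω t)
          - (∫ t in Set.Icc 0 τ, (∑ j, a j * φ j t) ^ 2 *
              ∫ ω', Real.exp (∑ l, β₀ l * Zg ω' l) * Yg ω' t)|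
          ≤ (1 / 2) * ∫ t in Set.Icc 0 τ, (∑ j, a j * φ j t) ^ 2 *
              ∫ ω', Real.exp (∑ l, β₀ l * Zg ω' l) * Yg ω' t) →
      -- ω ∈ Δ₂
      (∀ a : J → ℝ,
        |((n : ℝ)⁻¹ * ∑ i, ∫ t in Set.Icc 0 τ,
            (∑ j, a j * φ j t) ^ 2 *
              Real.exp (∑ l, βhat ω l * Z i ω l) * Y i ω t)
          - ((n : ℝ)⁻¹ * ∑ i, ∫ t in Set.Icc 0 τ,
              (∑ j, a j * φ j t) ^ 2 *
                Real.exp (∑ l, β₀ l * Z i ω l) * Y i ω t)|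
          ≤ (1 / 2) * ((n : ℝ)⁻¹ * ∑ i, ∫ t in Set.Icc 0 τ,
              (∑ j, a j * φ j t) ^ 2 *
                Real.exp (∑ l, β₀ l * Z i ω l) * Y i ω t)) →
      -- ω ∈ Ω₀
      |f₀hat ω / f₀ - 1| ≤ 1 / 2 →
      -- then: quadratic-form lower bound on the Gram matrix, and invertibility
      (∀ a : J → ℝ,
        max (f₀hat ω * Real.exp (-(B * ∑ j, |β₀ j|)) *
              Real.exp (-(B * ∑ j, |β₀ j - βhat ω j|)) / 6)
            (1 / Real.sqrt n) * (∑ j, (a j) ^ 2)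
          ≤ ∑ j, ∑ l, a j *
              ((n : ℝ)⁻¹ * ∑ i, ∫ t in Set.Icc 0 τ,
                φ j t * φ l t *
                  Real.exp (∑ l', βhat ω l' * Z i ω l') * Y i ω t) * a l)
      ∧ IsUnit (Matrix.of fun j l : J =>
          (n : ℝ)⁻¹ * ∑ i, ∫ t in Set.Icc 0 τ,
            φ j t * φ l t *
              Real.exp (∑ l', βhat ω l' * Z i ω l') * Y i ω t) := by
  intro ω hΔ1 hΔ2 hΩ0
  set c0 : ℝ := f₀ * Real.exp (-(B * ∑ j, |β₀ j|)) with hc0def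
  have hc0pos : 0 < c0 := mul_pos hf₀ (Real.exp_pos _)
  -- integrability of products of the φ's
  have hjj : ∀ j, Integrable (fun t => φ j t * φ j t)
      (volume.restrict (Set.Icc (0:ℝ) τ)) := by
    intro j
    by_contra hni
    have h0 : (∫ t in Set.Icc (0:ℝ) τ, φ j t * φ j t) = 0 := integral_undef hni
    rw [hφortho j j] at h0
    simp at h0
  have hsq : ∀ j l, Integrable (fun t => φ j t * φ l t)
      (volume.restrict (Set.Icc (0:ℝ) τ)) := by
    intro j l
    refine Integrable.mono' ((hjj j).add (hjj l))
      (((hφmeas j).mul (hφmeas l)).aestronglyMeasurable)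
      (Filter.Eventually.of_forall fun t => ?_)
    simp only [Pi.add_apply]
    rw [Real.norm_eq_abs, abs_mul]
    nlinarith [sq_nonneg (|φ j t| - |φ l t|), abs_nonneg (φ j t), abs_nonneg (φ l t),
      sq_abs (φ j t), sq_abs (φ l t)]
  -- L² norm identity
  have hnorm : ∀ a : J → ℝ,
      (∫ t in Set.Icc (0:ℝ) τ, (∑ j, a j * φ j t) ^ 2) = ∑ j, (a j) ^ 2 := by
    intro a
    have h := stmt6_aux_expand (μ := volume.restrict (Set.Icc (0:ℝ) τ)) φ hsq a
      (fun _ => (1:ℝ)) aestronglyMeasurable_const 1 (by norm_num)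
    simp only [mul_one] at h
    rw [h]
    simp [hφortho, sq]
  -- expansion of the random quadratic forms
  have hQi : ∀ (a : J → ℝ) (β' : Fin p → ℝ) (i : Fin n),
      (∫ t in Set.Icc (0:ℝ) τ, (∑ j, a j * φ j t) ^ 2 *
          Real.exp (∑ l, β' l * Z i ω l) * Y i ω t)
        = ∑ j, ∑ l, (a j * a l) * ∫ t in Set.Icc (0:ℝ) τ,
            φ j t * φ l t * Real.exp (∑ l', β' l' * Z i ω l') * Y i ω t := by
    intro a β' i
    have hY : Measurable (fun t => Y i ω t) :=
      (hYmeas i).comp measurable_prodMk_left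
    have h := stmt6_aux_expand (μ := volume.restrict (Set.Icc (0:ℝ) τ)) φ hsq a
      (fun t => Real.exp (∑ l', β' l' * Z i ω l') * Y i ω t)
      ((measurable_const.mul hY).aestronglyMeasurable)
      (Real.exp (∑ l', β' l' * Z i ω l'))
      (fun t => by
        rw [abs_mul, abs_of_pos (Real.exp_pos _)]
        have h1 := (hY01 i ω t).1
        have h2 := (hY01 i ω t).2
        have : |Y i ω t| ≤ 1 := abs_le.mpr ⟨by linarith, h2⟩
        calc Real.exp (∑ l', β' l' * Z i ω l') * |Y i ω t|
            ≤ Real.exp (∑ l', β' l' * Z i ω l') * 1 :=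
              mul_le_mul_of_nonneg_left this (Real.exp_pos _).le
          _ = _ := mul_one _)
    simp_rw [← mul_assoc] at h
    exact h
  -- quadratic form equality
  have hform : ∀ a : J → ℝ,
      ((n : ℝ)⁻¹ * ∑ i, ∫ t in Set.Icc (0:ℝ) τ,
          (∑ j, a j * φ j t) ^ 2 *
            Real.exp (∑ l, βhat ω l * Z i ω l) * Y i ω t)
        = ∑ j, ∑ l, a j *
            ((n : ℝ)⁻¹ * ∑ i, ∫ t in Set.Icc (0:ℝ) τ,
              φ j t * φ l t *
                Real.exp (∑ l', βhat ω l' * Z i ω l') * Y i ω t) * a l := by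
    intro a
    simp_rw [hQi a (βhat ω)]
    simp_rw [Finset.mul_sum, Finset.sum_mul]
    rw [Finset.sum_comm]
    refine Finset.sum_congr rfl fun j _ => ?_
    rw [Finset.sum_comm]
    exact Finset.sum_congr rfl fun l _ => Finset.sum_congr rfl fun i _ => by ring
  -- the coefficient bound : max(...) ≤ c0/4
  have hsum0 : (0:ℝ) ≤ ∑ j, |β₀ j - βhat ω j| :=
    Finset.sum_nonneg fun j _ => abs_nonneg _
  have he2 : Real.exp (-(B * ∑ j, |β₀ j - βhat ω j|)) ≤ 1 := by
    rw [← Real.exp_zero]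
    exact Real.exp_le_exp.mpr (by nlinarith)
  have hfhat : f₀hat ω ≤ 3 / 2 * f₀ := by
    have h2 := (abs_le.mp hΩ0).2
    have : f₀hat ω / f₀ ≤ 3 / 2 := by linarith
    rw [div_le_iff₀ hf₀] at this
    linarith
  have hm1 : f₀hat ω * Real.exp (-(B * ∑ j, |β₀ j|)) *
      Real.exp (-(B * ∑ j, |β₀ j - βhat ω j|)) / 6 ≤ c0 / 4 := by
    rw [hc0def]
    have e1pos : (0:ℝ) < Real.exp (-(B * ∑ j, |β₀ j|)) := Real.exp_pos _
    have e2pos : (0:ℝ) < Real.exp (-(B * ∑ j, |β₀ j - βhat ω j|)) := Real.exp_pos _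
    nlinarith [mul_pos e1pos e2pos, mul_pos hf₀ e1pos,
      mul_le_mul_of_nonneg_right hfhat (mul_pos e1pos e2pos).le,
      mul_le_mul_of_nonneg_left he2 (mul_pos (by linarith : (0:ℝ) < 3/2*f₀) e1pos).le]
  have hnpos : (0:ℝ) < (n:ℝ) := by exact_mod_cast Nat.lt_of_lt_of_le Nat.zero_lt_one hn
  have hsn : 0 < Real.sqrt n := Real.sqrt_pos.mpr hnpos
  have hk : (0:ℝ) < f₀ * Real.exp (-(3 * B * R)) := mul_pos hf₀ (Real.exp_pos _)
  have hm2 : 1 / Real.sqrt n ≤ c0 / 4 := by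
    have h4 : 4 / (f₀ * Real.exp (-(3 * B * R))) ≤ Real.sqrt n := by
      have hsq4 : (4 / (f₀ * Real.exp (-(3 * B * R)))) ^ 2 ≤ (n:ℝ) := by
        rw [div_pow]
        norm_num
        exact hnlarge
      calc 4 / (f₀ * Real.exp (-(3 * B * R)))
          = Real.sqrt ((4 / (f₀ * Real.exp (-(3 * B * R)))) ^ 2) :=
            (Real.sqrt_sq (by positivity)).symm
        _ ≤ Real.sqrt n := Real.sqrt_le_sqrt hsq4
    have h5 : 4 ≤ Real.sqrt n * (f₀ * Real.exp (-(3 * B * R))) := by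
      rw [div_le_iff₀ hk] at h4
      linarith
    have hkc : f₀ * Real.exp (-(3 * B * R)) ≤ c0 := by
      rw [hc0def]
      have : Real.exp (-(3 * B * R)) ≤ Real.exp (-(B * ∑ j, |β₀ j|)) := by
        apply Real.exp_le_exp.mpr
        have hb0 : (0:ℝ) ≤ ∑ j, |β₀ j| := Finset.sum_nonneg fun j _ => abs_nonneg _
        nlinarith
      exact mul_le_mul_of_nonneg_left this hf₀.le
    rw [div_le_div_iff₀ hsn (by norm_num : (0:ℝ) < 4)]
    nlinarith [mul_le_mul_of_nonneg_left hkc hsn.le]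
  have hmax : max (f₀hat ω * Real.exp (-(B * ∑ j, |β₀ j|)) *
      Real.exp (-(B * ∑ j, |β₀ j - βhat ω j|)) / 6) (1 / Real.sqrt n) ≤ c0 / 4 :=
    max_le hm1 hm2
  -- the key quadratic form lower bound
  have hkey : ∀ a : J → ℝ,
      max (f₀hat ω * Real.exp (-(B * ∑ j, |β₀ j|)) *
            Real.exp (-(B * ∑ j, |β₀ j - βhat ω j|)) / 6)
          (1 / Real.sqrt n) * (∑ j, (a j) ^ 2)
        ≤ (n : ℝ)⁻¹ * ∑ i, ∫ t in Set.Icc (0:ℝ) τ,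
            (∑ j, a j * φ j t) ^ 2 *
              Real.exp (∑ l, βhat ω l * Z i ω l) * Y i ω t := by
    intro a
    by_cases ha : a = 0
    · subst ha
      simp
    · have hD := hlow a
      rw [hnorm a] at hD
      have h1 := abs_le.mp (hΔ1 a ha)
      have h2 := abs_le.mp (hΔ2 a)
      have hS : (0:ℝ) ≤ ∑ j, (a j) ^ 2 := Finset.sum_nonneg fun j _ => sq_nonneg _
      have hstep : c0 / 4 * (∑ j, (a j) ^ 2)
          ≤ (n : ℝ)⁻¹ * ∑ i, ∫ t in Set.Icc (0:ℝ) τ,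
              (∑ j, a j * φ j t) ^ 2 *
                Real.exp (∑ l, βhat ω l * Z i ω l) * Y i ω t := by
        linarith
      calc _ ≤ c0 / 4 * (∑ j, (a j) ^ 2) :=
            mul_le_mul_of_nonneg_right hmax hS
        _ ≤ _ := hstep
  constructor
  · intro a
    rw [← hform a]
    exact hkey a
  · -- invertibility via positive-definiteness
    set G : Matrix J J ℝ := Matrix.of fun j l : J =>
        (n : ℝ)⁻¹ * ∑ i, ∫ t in Set.Icc (0:ℝ) τ,
          φ j t * φ l t *
            Real.exp (∑ l', βhat ω l' * Z i ω l') * Y i ω t with hGdef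
    have hherm : G.IsHermitian := by
      refine Matrix.ext fun j l => ?_
      simp only [hGdef, Matrix.conjTranspose_apply, Matrix.of_apply, star_trivial]
      refine congrArg _ (Finset.sum_congr rfl fun i _ => ?_)
      exact integral_congr_ae (Filter.Eventually.of_forall fun t => by ring)
    have hpos : ∀ x : J → ℝ, x ≠ 0 → 0 < dotProduct (star x) (G.mulVec x) := by
      intro x hx
      have hdp : dotProduct (star x) (G.mulVec x)
          = ∑ j, ∑ l, x j * G j l * x l := by
        simp only [star_trivial, dotProduct, Matrix.mulVec, Finset.mul_sum]
        exact Finset.sum_congr rfl fun j _ => Finset.sum_congr rfl fun l _ => by ring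
      obtain ⟨j0, hj0⟩ := Function.ne_iff.mp hx
      have hxpos : (0:ℝ) < ∑ j, (x j) ^ 2 :=
        Finset.sum_pos' (fun j _ => sq_nonneg _)
          ⟨j0, Finset.mem_univ _,
            lt_of_le_of_ne (sq_nonneg _) (Ne.symm (pow_ne_zero 2 hj0))⟩
      have hb := hkey x
      rw [hform x] at hb
      have hco : 0 < max (f₀hat ω * Real.exp (-(B * ∑ j, |β₀ j|)) *
            Real.exp (-(B * ∑ j, |β₀ j - βhat ω j|)) / 6) (1 / Real.sqrt n) :=
        lt_max_of_lt_right (by positivity)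
      rw [hdp]
      calc (0:ℝ) < max _ _ * (∑ j, (x j) ^ 2) := mul_pos hco hxpos
        _ ≤ _ := hb
    have hpd : G.PosDef := Matrix.PosDef.of_dotProduct_mulVec_pos hherm hpos
    exact hpd.isUnit
end
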